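/- arXiv:0801.1923 — 12 statements merged into one kernel-verified Lean document; each statement's English description precedes it below -/
import Mathlib

section
/- Let I ⊆ ℝ be an open interval, let g, μ : I → ℝ be differentiable functions and let λ : I → ℝ be a continuous function such that g(t) > 0 and λ(t) ≠ μ(t) for all t ∈ I, the set {t ∈ I : g'(t) ≠ 0} is dense in I, and μ'(t) = 2(λ(t) − μ(t))·g'(t)/g(t) for all t ∈ I. Then the following conditions are equivalent: (a) there exists E ∈ ℝ such that λ(t) − μ(t) = E·g(t)² for all t ∈ I; (b) there exist C, D ∈ ℝ such that μ(t) = C·g(t)² + D for all t ∈ I; (c) the function λ − 2μ is constant on I. -/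
/-!
Write `u = l - m`, so that the equation reads `m' = 2 u g'/g`. If `u = E g²` the right-hand side
is `(E g²)'`, so `m - E g²` is constant. Conversely, if `m = C g² + D` then `m' = 2 C g g'`, and
comparing with the equation gives `u = C g²` wherever `g' ≠ 0`, hence everywhere by density and
continuity. Finally, `l - 2m = k` says `u = m + k`, and then `(m + k)/g²` has derivative zero.
-/

open Set

theorem IsOpen.exists_const_of_hasDerivAt_zero {I : Set ℝ} (hI : IsOpen I)
    (hIc : IsPreconnected I) {F : ℝ → ℝ} (hF : ∀ t ∈ I, HasDerivAt F 0 t) :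
    ∃ c, ∀ t ∈ I, F t = c :=
  hI.exists_is_const_of_deriv_eq_zero hIc
    (fun t ht => (hF t ht).differentiableAt.differentiableWithinAt) (fun t ht => (hF t ht).deriv)

section RicciEigenvalueODE

variable {I : Set ℝ} {g g' m l : ℝ → ℝ}
  (hg : ∀ t ∈ I, HasDerivAt g (g' t) t)
  (hm : ∀ t ∈ I, HasDerivAt m (2 * (l t - m t) * g' t / g t) t)
  (hg0 : ∀ t ∈ I, g t ≠ 0)
include hg hm hg0

theorem exists_eq_mul_sq_add_of_sub_eq_mul_sq (hI : IsOpen I) (hIc : IsPreconnected I) {E : ℝ}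
    (ha : ∀ t ∈ I, l t - m t = E * g t ^ 2) :
    ∃ D, ∀ t ∈ I, m t = E * g t ^ 2 + D := by
  have hderiv : ∀ t ∈ I, HasDerivAt (fun s => m s - E * g s ^ 2) 0 t := by
    intro t ht
    refine ((hm t ht).sub (((hg t ht).pow 2).const_mul E)).congr_deriv ?_
    have hgt := hg0 t ht
    rw [ha t ht]
    field_simp
    ring
  obtain ⟨D, hD⟩ := hI.exists_const_of_hasDerivAt_zero hIc hderiv
  exact ⟨D, fun t ht => by linarith [hD t ht]⟩

theorem sub_eq_mul_sq_of_eq_mul_sq_add (hI : IsOpen I) (hl : ContinuousOn l I)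
    (hdense : I ⊆ closure {t ∈ I | g' t ≠ 0}) {C D : ℝ}
    (hb : ∀ t ∈ I, m t = C * g t ^ 2 + D) :
    ∀ t ∈ I, l t - m t = C * g t ^ 2 := by
  have hgC : ContinuousOn g I := fun t ht => (hg t ht).continuousAt.continuousWithinAt
  have hmC : ContinuousOn m I := fun t ht => (hm t ht).continuousAt.continuousWithinAt
  have hcrit : EqOn (fun t => l t - m t) (fun t => C * g t ^ 2) {t ∈ I | g' t ≠ 0} := by
    rintro t ⟨ht, hg't⟩
    have hm' : HasDerivAt m (C * (2 * g t * g' t)) t := by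
      have hloc : (fun s => C * g s ^ 2 + D) =ᶠ[nhds t] m :=
        Filter.eventuallyEq_of_mem (hI.mem_nhds ht) fun s hs => (hb s hs).symm
      refine ((((hg t ht).pow 2).const_mul C).add_const D).congr_of_eventuallyEq hloc.symm
        |>.congr_deriv ?_
      norm_num
    have hslopes := (hm t ht).unique hm'
    rw [div_eq_iff (hg0 t ht)] at hslopes
    exact mul_right_cancel₀ hg't (by linear_combination hslopes / 2)
  exact hcrit.of_subset_closure (hl.sub hmC) (continuousOn_const.mul (hgC.pow 2))
    (fun t ht => ht.1) hdense

theorem exists_eq_mul_sq_sub_of_sub_two_mul_eq (hI : IsOpen I) (hIc : IsPreconnected I) {k : ℝ}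
    (hc : ∀ t ∈ I, l t - 2 * m t = k) :
    ∃ C, ∀ t ∈ I, m t = C * g t ^ 2 - k := by
  have hderiv : ∀ t ∈ I, HasDerivAt (fun s => (m s + k) / g s ^ 2) 0 t := by
    intro t ht
    have hgt := hg0 t ht
    refine (((hm t ht).add_const k).div ((hg t ht).pow 2) (pow_ne_zero 2 hgt)).congr_deriv ?_
    rw [show l t - m t = m t + k by linarith [hc t ht], Pi.pow_apply]
    field_simp
    ring
  obtain ⟨C, hC⟩ := hI.exists_const_of_hasDerivAt_zero hIc hderiv
  refine ⟨C, fun t ht => ?_⟩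
  rw [← hC t ht]
  field_simp [hg0 t ht]
  ring

end RicciEigenvalueODE

theorem stmt_0_general (I : Set ℝ) (hIopen : IsOpen I) (hIconn : I.OrdConnected)
    (g m l : ℝ → ℝ)
    (hg : ∀ t ∈ I, DifferentiableAt ℝ g t)
    (hm : ∀ t ∈ I, DifferentiableAt ℝ m t)
    (hl : ContinuousOn l I)
    (hgpos : ∀ t ∈ I, 0 < g t)
    (hdense : I ⊆ closure {t ∈ I | deriv g t ≠ 0})
    (hode : ∀ t ∈ I, deriv m t = 2 * (l t - m t) * deriv g t / g t) :
    ((∃ E : ℝ, ∀ t ∈ I, l t - m t = E * g t ^ 2) ↔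
      (∃ C D : ℝ, ∀ t ∈ I, m t = C * g t ^ 2 + D)) ∧
    ((∃ C D : ℝ, ∀ t ∈ I, m t = C * g t ^ 2 + D) ↔
      (∃ k : ℝ, ∀ t ∈ I, l t - 2 * m t = k)) := by
  have hg' : ∀ t ∈ I, HasDerivAt g (deriv g t) t := fun t ht => (hg t ht).hasDerivAt
  have hm' : ∀ t ∈ I, HasDerivAt m (2 * (l t - m t) * deriv g t / g t) t :=
    fun t ht => hode t ht ▸ (hm t ht).hasDerivAt
  have hg0 : ∀ t ∈ I, g t ≠ 0 := fun t ht => (hgpos t ht).ne'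
  have hIc : IsPreconnected I := hIconn.isPreconnected
  constructor
  · constructor
    · rintro ⟨E, ha⟩
      obtain ⟨D, hD⟩ := exists_eq_mul_sq_add_of_sub_eq_mul_sq hg' hm' hg0 hIopen hIc ha
      exact ⟨E, D, hD⟩
    · rintro ⟨C, D, hb⟩
      exact ⟨C, sub_eq_mul_sq_of_eq_mul_sq_add hg' hm' hg0 hIopen hl hdense hb⟩
  · constructor
    · rintro ⟨C, D, hb⟩
      have ha := sub_eq_mul_sq_of_eq_mul_sq_add hg' hm' hg0 hIopen hl hdense hb
      exact ⟨-D, fun t ht => by linarith [hb t ht, ha t ht]⟩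
    · rintro ⟨k, hc⟩
      obtain ⟨C, hC⟩ := exists_eq_mul_sq_sub_of_sub_two_mul_eq hg' hm' hg0 hIopen hIc hc
      exact ⟨C, -k, fun t ht => by rw [hC t ht, sub_eq_add_neg]⟩

/-- Proposition 6 (analytic content): on an open interval where `g > 0`,
`l ≠ m`, `g' ≠ 0` on a dense subset and `m' = 2(l - m) g'/g`, the
conditions (a) `l - m = E g²`, (b) `m = C g² + D`, (c) `l - 2m` constant
are equivalent. -/
theorem stmt_0 (I : Set ℝ) (hIopen : IsOpen I) (hIconn : I.OrdConnected)
    (g m l : ℝ → ℝ)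
    (hg : ∀ t ∈ I, DifferentiableAt ℝ g t)
    (hm : ∀ t ∈ I, DifferentiableAt ℝ m t)
    (hl : ContinuousOn l I)
    (hgpos : ∀ t ∈ I, 0 < g t)
    (hne : ∀ t ∈ I, l t ≠ m t)
    (hdense : I ⊆ closure {t ∈ I | deriv g t ≠ 0})
    (hode : ∀ t ∈ I, deriv m t = 2 * (l t - m t) * deriv g t / g t) :
    ((∃ E : ℝ, ∀ t ∈ I, l t - m t = E * g t ^ 2) ↔
      (∃ C D : ℝ, ∀ t ∈ I, m t = C * g t ^ 2 + D)) ∧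
    ((∃ C D : ℝ, ∀ t ∈ I, m t = C * g t ^ 2 + D) ↔
      (∃ k : ℝ, ∀ t ∈ I, l t - 2 * m t = k)) :=
  stmt_0_general I hIopen hIconn g m l hg hm hl hgpos hdense hode
end

section
/- Let I ⊆ ℝ be an open interval, let s ∈ ℝ, and let f, g : I → ℝ be twice differentiable functions with f(t) ≠ 0 and g(t) ≠ 0 for all t ∈ I. Suppose that f'(t)·g'(t)·g(t)³ − g''(t)·f(t)·g(t)³ = s²·f(t)³ for all t ∈ I. Then the function t ↦ g'(t)²/f(t)² − s²/g(t)² is constant on I; equivalently, there exists a constant A ∈ ℝ such that f(t)²·(s² + A·g(t)²) = g(t)²·g'(t)² for all t ∈ I. -/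
/-! Differentiating `g'²/f² − s²/g²` gives `2 g' (g'' f g³ − f' g' g³ + s² f³) / (f³ g³)`, which the
equation kills, so this function is constant on the interval; clearing denominators in
`g'²/f² − s²/g² = A` gives the second form. -/

theorem Set.OrdConnected.exists_forall_eq_of_hasDerivAt_zero {E : Type*} [NormedAddCommGroup E]
    [NormedSpace ℝ E] {I : Set ℝ} (hI : I.OrdConnected) {h : ℝ → E}
    (hh : ∀ t ∈ I, HasDerivAt h 0 t) : ∃ c, ∀ t ∈ I, h t = c := by
  rcases I.eq_empty_or_nonempty with rfl | ⟨t₀, ht₀⟩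
  · exact ⟨0, by simp⟩
  refine ⟨h t₀, fun t ht => ?_⟩
  have hle := Convex.norm_image_sub_le_of_norm_hasDerivWithin_le (C := 0)
    (fun x hx => (hh x hx).hasDerivWithinAt) (fun _ _ => norm_zero.le)
    (convex_iff_ordConnected.mpr hI) ht₀ ht
  simpa [sub_eq_zero] using hle

theorem hasDerivAt_deriv_sq_div_sq_sub_sq_div_sq (s : ℝ) {f g : ℝ → ℝ} {t : ℝ}
    (hf : DifferentiableAt ℝ f t) (hg : DifferentiableAt ℝ g t)
    (hg' : DifferentiableAt ℝ (deriv g) t) (hft : f t ≠ 0) (hgt : g t ≠ 0) :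
    HasDerivAt (fun x => deriv g x ^ 2 / f x ^ 2 - s ^ 2 / g x ^ 2)
      (2 * deriv g t * (deriv (deriv g) t * f t * g t ^ 3 - deriv f t * deriv g t * g t ^ 3
        + s ^ 2 * f t ^ 3) / (f t ^ 3 * g t ^ 3)) t := by
  have hquot :=
    ((hg'.hasDerivAt.fun_pow 2).fun_div (hf.hasDerivAt.fun_pow 2) (pow_ne_zero 2 hft)).fun_sub
      ((hasDerivAt_const t (s ^ 2)).fun_div (hg.hasDerivAt.fun_pow 2) (pow_ne_zero 2 hgt))
  refine hquot.congr_deriv ?_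
  field_simp
  ring

theorem sq_mul_add_eq_of_div_sq_sub_div_sq_eq {a b c s A : ℝ} (hb : b ≠ 0) (hc : c ≠ 0)
    (h : a ^ 2 / b ^ 2 - s ^ 2 / c ^ 2 = A) : b ^ 2 * (s ^ 2 + A * c ^ 2) = c ^ 2 * a ^ 2 := by
  subst h
  field_simp
  ring

theorem stmt_1_general (I : Set ℝ) (hIconn : I.OrdConnected)
    (s : ℝ) (f g : ℝ → ℝ)
    (hf : ∀ t ∈ I, DifferentiableAt ℝ f t)
    (hg : ∀ t ∈ I, DifferentiableAt ℝ g t)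
    (hg' : ∀ t ∈ I, DifferentiableAt ℝ (deriv g) t)
    (hfne : ∀ t ∈ I, f t ≠ 0)
    (hgne : ∀ t ∈ I, g t ≠ 0)
    (heq : ∀ t ∈ I, deriv f t * deriv g t * g t ^ 3
        - deriv (deriv g) t * f t * g t ^ 3 = s ^ 2 * f t ^ 3) :
    (∃ c : ℝ, ∀ t ∈ I,
        (deriv g t) ^ 2 / f t ^ 2 - s ^ 2 / g t ^ 2 = c) ∧
    (∃ A : ℝ, ∀ t ∈ I,
        f t ^ 2 * (s ^ 2 + A * g t ^ 2) = g t ^ 2 * (deriv g t) ^ 2) := by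
  have hderiv : ∀ t ∈ I,
      HasDerivAt (fun x => deriv g x ^ 2 / f x ^ 2 - s ^ 2 / g x ^ 2) 0 t := by
    intro t ht
    convert hasDerivAt_deriv_sq_div_sq_sub_sq_div_sq s (hf t ht) (hg t ht) (hg' t ht)
      (hfne t ht) (hgne t ht) using 1
    rw [← heq t ht]
    ring
  obtain ⟨c, hc⟩ := hIconn.exists_forall_eq_of_hasDerivAt_zero hderiv
  exact ⟨⟨c, hc⟩, ⟨c, fun t ht =>
    sq_mul_add_eq_of_div_sq_sub_div_sq_eq (hfne t ht) (hgne t ht) (hc t ht)⟩⟩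

/-- First integral underlying equation (3.3): if `f' g' g³ − g'' f g³ = s² f³`
on an open interval with `f, g` nonvanishing, then `g'²/f² − s²/g²` is
constant; equivalently `f² (s² + A g²) = g² g'²` for some constant `A`. -/
theorem stmt_1 (I : Set ℝ) (hIopen : IsOpen I) (hIconn : I.OrdConnected)
    (s : ℝ) (f g : ℝ → ℝ)
    (hf : ∀ t ∈ I, DifferentiableAt ℝ f t)
    (hg : ∀ t ∈ I, DifferentiableAt ℝ g t)
    (hg' : ∀ t ∈ I, DifferentiableAt ℝ (deriv g) t)
    (hfne : ∀ t ∈ I, f t ≠ 0)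
    (hgne : ∀ t ∈ I, g t ≠ 0)
    (heq : ∀ t ∈ I, deriv f t * deriv g t * g t ^ 3
        - deriv (deriv g) t * f t * g t ^ 3 = s ^ 2 * f t ^ 3) :
    (∃ c : ℝ, ∀ t ∈ I,
        (deriv g t) ^ 2 / f t ^ 2 - s ^ 2 / g t ^ 2 = c) ∧
    (∃ A : ℝ, ∀ t ∈ I,
        f t ^ 2 * (s ^ 2 + A * g t ^ 2) = g t ^ 2 * (deriv g t) ^ 2) :=
  stmt_1_general I hIconn s f g hf hg hg' hfne hgne heq
end

section
/- Let I ⊆ ℝ be an open interval, let s, A ∈ ℝ, and let g : I → ℝ be a twice differentiable function with s² + A·g(t)² > 0 for all t ∈ I. Define f : I → ℝ by f(t) = g(t)·g'(t)/√(s² + A·g(t)²). Then f is differentiable on I and f'(t)·g'(t)·g(t)³ − g''(t)·f(t)·g(t)³ = s²·f(t)³ for all t ∈ I. -/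
/-! With `Q = s² + A g²` one finds `f' = ((g'² + g g'') Q - A g² g'²) / Q^{3/2}`, so in
`f' g' - g'' f` the `g g''` terms cancel and what remains is `g'³ (Q - A g²) / Q^{3/2} = s² g'³ / Q^{3/2}`;
multiplying by `g³` gives `s² f³`. -/

open Real

theorem hasDerivAt_mul_div_sqrt_sq_add_mul_sq {u v : ℝ → ℝ} {u' v' s A t : ℝ}
    (hu : HasDerivAt u u' t) (hv : HasDerivAt v v' t) (hQ : 0 < s ^ 2 + A * u t ^ 2) :
    HasDerivAt (fun x => u x * v x / √(s ^ 2 + A * u x ^ 2))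
      (((u' * v t + u t * v') * (s ^ 2 + A * u t ^ 2) - A * u t ^ 2 * u' * v t)
        / ((s ^ 2 + A * u t ^ 2) * √(s ^ 2 + A * u t ^ 2))) t := by
  have hQd : HasDerivAt (fun x => s ^ 2 + A * u x ^ 2) (A * (2 * u t * u')) t := by
    simpa [mul_comm, mul_assoc, mul_left_comm] using ((hu.pow 2).const_mul A).const_add (s ^ 2)
  have hr : √(s ^ 2 + A * u t ^ 2) ≠ 0 := (sqrt_pos.2 hQ).ne'
  refine ((hu.mul hv).div (hQd.sqrt hQ.ne') hr).congr_deriv ?_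
  have hr2 : √(s ^ 2 + A * u t ^ 2) ^ 2 = s ^ 2 + A * u t ^ 2 := sq_sqrt hQ.le
  generalize √(s ^ 2 + A * u t ^ 2) = r at hr hr2 ⊢
  rw [← hr2, Pi.mul_apply]
  field_simp

theorem ansatz_eigenvalue_equation_algebraic {u u' u'' s A : ℝ} (hQ : 0 < s ^ 2 + A * u ^ 2) :
    ((u' * u' + u * u'') * (s ^ 2 + A * u ^ 2) - A * u ^ 2 * u' * u')
        / ((s ^ 2 + A * u ^ 2) * √(s ^ 2 + A * u ^ 2)) * u' * u ^ 3
      - u'' * (u * u' / √(s ^ 2 + A * u ^ 2)) * u ^ 3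
      = s ^ 2 * (u * u' / √(s ^ 2 + A * u ^ 2)) ^ 3 := by
  have hr : √(s ^ 2 + A * u ^ 2) ≠ 0 := (sqrt_pos.2 hQ).ne'
  have hr2 : √(s ^ 2 + A * u ^ 2) ^ 2 = s ^ 2 + A * u ^ 2 := sq_sqrt hQ.le
  generalize √(s ^ 2 + A * u ^ 2) = r at hr hr2 ⊢
  rw [← hr2]
  field_simp
  linear_combination (u ^ 3 * u' ^ 3) * hr2

theorem stmt_2_general (I : Set ℝ)
    (s A : ℝ) (g f : ℝ → ℝ)
    (hg : ∀ t ∈ I, DifferentiableAt ℝ g t)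
    (hg' : ∀ t ∈ I, DifferentiableAt ℝ (deriv g) t)
    (hpos : ∀ t ∈ I, 0 < s ^ 2 + A * g t ^ 2)
    (hf : ∀ t, f t = g t * deriv g t / Real.sqrt (s ^ 2 + A * g t ^ 2)) :
    (∀ t ∈ I, DifferentiableAt ℝ f t) ∧
    (∀ t ∈ I, deriv f t * deriv g t * g t ^ 3
        - deriv (deriv g) t * f t * g t ^ 3 = s ^ 2 * f t ^ 3) := by
  obtain rfl : f = fun t => g t * deriv g t / √(s ^ 2 + A * g t ^ 2) := funext hf
  have hf' := fun t (ht : t ∈ I) => hasDerivAt_mul_div_sqrt_sq_add_mul_sq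
    (hg t ht).hasDerivAt (hg' t ht).hasDerivAt (hpos t ht)
  refine ⟨fun t ht => (hf' t ht).differentiableAt, fun t ht => ?_⟩
  rw [(hf' t ht).deriv]
  exact ansatz_eigenvalue_equation_algebraic (hpos t ht)

/-- Converse direction of equation (3.3): the ansatz `f = g g'/√(s² + A g²)`
solves `f' g' g³ − g'' f g³ = s² f³`. -/
theorem stmt_2 (I : Set ℝ) (hIopen : IsOpen I) (hIconn : I.OrdConnected)
    (s A : ℝ) (g f : ℝ → ℝ)
    (hg : ∀ t ∈ I, DifferentiableAt ℝ g t)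
    (hg' : ∀ t ∈ I, DifferentiableAt ℝ (deriv g) t)
    (hpos : ∀ t ∈ I, 0 < s ^ 2 + A * g t ^ 2)
    (hf : ∀ t, f t = g t * deriv g t / Real.sqrt (s ^ 2 + A * g t ^ 2)) :
    (∀ t ∈ I, DifferentiableAt ℝ f t) ∧
    (∀ t ∈ I, deriv f t * deriv g t * g t ^ 3
        - deriv (deriv g) t * f t * g t ^ 3 = s ^ 2 * f t ^ 3) :=
  stmt_2_general I s A g f hg hg' hpos hf
end

section
/- Let s > 0 and ε, C, D, E ∈ ℝ. Define z : ℝ → ℝ by z(h) = (1 − (h/s)²)⁻¹ · ( −4ε(h/s)² − (Ds⁴/5)(h/s)⁶ + (Ds⁴ − Cs²/3)(h/s)⁴ + (2Cs² − 3Ds⁴)(h/s)² − 4ε + Cs² − Ds⁴ + (E/s)(h/s) ). Then for every h ∈ ℝ with h ≠ 0 and h² ≠ s², the derivative of z satisfies z'(h) − z(h)·(s² + h²)/(h(s² − h²)) = 4ε/h + D(s² − h²)²/h − C(s² − h²)/h. -/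
/-!
The integrating factor of (3.5) is `(s² - h²) / h`: the function `h / (s² - h²)` solves the
homogeneous equation, so writing `z(h) = h W(h) / (s² - h²)` turns (3.5) into
`W'(h) = (s² - h²) (4ε + D (s² - h²)² - C (s² - h²)) / h²`.
Formula (3.7) is exactly this with `W` the Laurent polynomial below, `E` being the
constant of integration.
-/

open Filter Topology

/-- `(s² - h²) z(h) / h` for the solution `z` of (3.7). -/
noncomputable def integratedZ (s e C D E x : ℝ) : ℝ :=
  s ^ 2 * (C * s ^ 2 - D * s ^ 4 - 4 * e) / x + E + (2 * C * s ^ 2 - 3 * D * s ^ 4 - 4 * e) * x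
    + (D * s ^ 2 - C / 3) * x ^ 3 - D / 5 * x ^ 5

theorem hasDerivAt_integratedZ (s e C D E : ℝ) {x : ℝ} (hx : x ≠ 0) :
    HasDerivAt (integratedZ s e C D E)
      ((s ^ 2 - x ^ 2) / x ^ 2 * (4 * e + D * (s ^ 2 - x ^ 2) ^ 2 - C * (s ^ 2 - x ^ 2))) x := by
  have h := (((((hasDerivAt_inv hx).const_mul (s ^ 2 * (C * s ^ 2 - D * s ^ 4 - 4 * e))).add_const
    E).add ((hasDerivAt_id x).const_mul (2 * C * s ^ 2 - 3 * D * s ^ 4 - 4 * e))).add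
    ((hasDerivAt_pow 3 x).const_mul (D * s ^ 2 - C / 3))).sub
    ((hasDerivAt_pow 5 x).const_mul (D / 5))
  refine h.congr_deriv ?_
  field_simp
  ring

theorem hasDerivAt_mul_div_sq_sub_sq {W : ℝ → ℝ} {w s x : ℝ} (hW : HasDerivAt W w x)
    (hx : x ≠ 0) (hxs : s ^ 2 - x ^ 2 ≠ 0) :
    HasDerivAt (fun y => y * W y / (s ^ 2 - y ^ 2))
      (x * W x / (s ^ 2 - x ^ 2) * (s ^ 2 + x ^ 2) / (x * (s ^ 2 - x ^ 2))
        + x / (s ^ 2 - x ^ 2) * w) x := by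
  refine (((hasDerivAt_id x).mul hW).div ((hasDerivAt_const x (s ^ 2)).sub (hasDerivAt_pow 2 x))
    hxs).congr_deriv ?_
  simp only [Pi.mul_apply, Pi.sub_apply, id, Nat.cast_ofNat]
  field_simp
  ring

theorem formula37_eq_mul_integratedZ {s : ℝ} (hs : s ≠ 0) (e C D E : ℝ) {x : ℝ} (hx : x ≠ 0) :
    (1 - (x / s) ^ 2)⁻¹ *
        (-4 * e * (x / s) ^ 2 - (D * s ^ 4 / 5) * (x / s) ^ 6
          + (D * s ^ 4 - C * s ^ 2 / 3) * (x / s) ^ 4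
          + (2 * C * s ^ 2 - 3 * D * s ^ 4) * (x / s) ^ 2
          - 4 * e + C * s ^ 2 - D * s ^ 4 + (E / s) * (x / s))
      = x * integratedZ s e C D E x / (s ^ 2 - x ^ 2) := by
  rcases eq_or_ne (s ^ 2 - x ^ 2) 0 with hxs | hxs
  · -- both sides are the junk values `0⁻¹ * _` and `_ / 0`
    have : 1 - (x / s) ^ 2 = 0 := by
      rw [div_pow, sub_eq_zero, eq_div_iff (pow_ne_zero 2 hs)]
      linarith
    simp [this, hxs]
  · have : 1 - (x / s) ^ 2 = (s ^ 2 - x ^ 2) / s ^ 2 := by field_simp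
    rw [this, integratedZ]
    field_simp
    ring

/-- Formula (3.7) solves the linear first-order ODE (3.5). -/
theorem stmt_3 (s e C D E : ℝ) (hs : 0 < s) (z : ℝ → ℝ)
    (hz : z = fun h : ℝ =>
      (1 - (h / s) ^ 2)⁻¹ *
        (-4 * e * (h / s) ^ 2 - (D * s ^ 4 / 5) * (h / s) ^ 6
          + (D * s ^ 4 - C * s ^ 2 / 3) * (h / s) ^ 4
          + (2 * C * s ^ 2 - 3 * D * s ^ 4) * (h / s) ^ 2
          - 4 * e + C * s ^ 2 - D * s ^ 4 + (E / s) * (h / s))) :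
    ∀ h : ℝ, h ≠ 0 → h ^ 2 ≠ s ^ 2 →
      deriv z h - z h * (s ^ 2 + h ^ 2) / (h * (s ^ 2 - h ^ 2)) =
        4 * e / h + D * (s ^ 2 - h ^ 2) ^ 2 / h - C * (s ^ 2 - h ^ 2) / h := by
  intro h hh hhs
  have hsh : s ^ 2 - h ^ 2 ≠ 0 := sub_ne_zero.mpr hhs.symm
  have hzW : z =ᶠ[𝓝 h] fun x => x * integratedZ s e C D E x / (s ^ 2 - x ^ 2) := by
    filter_upwards [isOpen_ne.mem_nhds hh] with x hx
    rw [hz]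
    exact formula37_eq_mul_integratedZ hs.ne' e C D E hx
  rw [hzW.deriv_eq, hzW.eq_of_nhds,
    (hasDerivAt_mul_div_sq_sub_sq (hasDerivAt_integratedZ s e C D E hh) hh hsh).deriv]
  field_simp
  ring
end

section
/- Let s > 0 and C, D, E ∈ ℝ, let −1 < y < x < 1, and let P : ℝ → ℝ be the polynomial P(t) = −(D/5)t⁶ + (D − C/3)t⁴ + (2C − 3D)t² + Et + C − D. If P(x) = 0, P(y) = 0, P'(x) = −2s(1 − x²) and P'(y) = 2s(1 − y²), then y = −x and E = 0. -/
/-!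
Eliminating `C, D, E` from the four boundary conditions leaves a single polynomial relation in
`x, y, s`, which factors as `(x + y) · s (x - y)³ (1 - x²)(1 - y²) Q(x, y) = 0` with
`Q = (2xy + 3)(x - y)² + 5(1 - xy)²`. For `-1 < y < x < 1` and `s > 0` every factor but `x + y`
is positive, so `y = -x`; the even part of `P` then cancels in `P(x) - P(-x) = 2Ex = 0`.
-/

namespace BoundaryPoly

noncomputable def P (C D E : ℝ) : ℝ → ℝ := fun t =>
  -(D / 5) * t ^ 6 + (D - C / 3) * t ^ 4 + (2 * C - 3 * D) * t ^ 2 + E * t + C - D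

variable (C D E : ℝ)

theorem hasDerivAt_P (t : ℝ) :
    HasDerivAt (P C D E)
      (-(6 / 5) * D * t ^ 5 + 4 * (D - C / 3) * t ^ 3 + 2 * (2 * C - 3 * D) * t + E) t := by
  have := (((((hasDerivAt_pow 6 t).const_mul (-(D / 5))).add
    ((hasDerivAt_pow 4 t).const_mul (D - C / 3))).add
    ((hasDerivAt_pow 2 t).const_mul (2 * C - 3 * D))).add
    ((hasDerivAt_id t).const_mul E)).add_const C |>.sub_const D
  exact this.congr_deriv (by norm_num; ring)

theorem P_sub_P_neg (t : ℝ) : P C D E t - P C D E (-t) = 2 * E * t := by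
  unfold P; ring

variable {C D E}

theorem boundary_conditions_eliminant {s x y : ℝ} (hPx : P C D E x = 0) (hPy : P C D E y = 0)
    (hPx' : -(6 / 5) * D * x ^ 5 + 4 * (D - C / 3) * x ^ 3 + 2 * (2 * C - 3 * D) * x + E
      = -2 * s * (1 - x ^ 2))
    (hPy' : -(6 / 5) * D * y ^ 5 + 4 * (D - C / 3) * y ^ 3 + 2 * (2 * C - 3 * D) * y + E
      = 2 * s * (1 - y ^ 2)) :
    (x + y) * (s * (x - y) ^ 3 * (1 - x ^ 2) * (1 - y ^ 2) *
      ((2 * x * y + 3) * (x - y) ^ 2 + 5 * (1 - x * y) ^ 2)) = 0 := by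
  unfold P at hPx hPy
  -- The conditions are linear in `(C, D, E, s)`; the multipliers are scaled cofactors of their
  -- 4 × 4 matrix, so the combination leaves `s` times its determinant.
  linear_combination
    (15*y - 20*y^3 - 6*y^5 + 12*y^7 - y^9 - 15*x + 45*x*y^4 - 30*x*y^6
      + 20*x^3 - 30*x^3*y^2 + 10*x^3*y^6 - 9*x^5 + 18*x^5*y^2 - 9*x^5*y^4) * hPx
    + (-15*y + 20*y^3 - 9*y^5 + 15*x - 30*x^2*y^3 + 18*x^2*y^5 - 20*x^3
      + 45*x^4*y - 9*x^4*y^5 - 6*x^5 - 30*x^6*y + 10*x^6*y^3 + 12*x^7 - x^9) * hPy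
    + ((15/2)*y^2 - 15*y^4 + (15/2)*y^6 - 15*x*y + 20*x*y^3 + 6*x*y^5
      - 12*x*y^7 + x*y^9 + (15/2)*x^2 + (-45/2)*x^2*y^4 + 15*x^2*y^6
      - 5*x^4 + (15/2)*x^4*y^2 + (-5/2)*x^4*y^6 + (3/2)*x^6 - 3*x^6*y^2
      + (3/2)*x^6*y^4) * hPx'
    + ((15/2)*y^2 - 5*y^4 + (3/2)*y^6 - 15*x*y + (15/2)*x^2
      + (15/2)*x^2*y^4 - 3*x^2*y^6 + 20*x^3*y - 15*x^4 + (-45/2)*x^4*y^2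
      + (3/2)*x^4*y^6 + 6*x^5*y + (15/2)*x^6 + 15*x^6*y^2 + (-5/2)*x^6*y^4
      - 12*x^7*y + x^9*y) * hPy'

end BoundaryPoly

theorem eliminant_cofactor_pos {s x y : ℝ} (hs : 0 < s) (hy : -1 < y) (hyx : y < x)
    (hx : x < 1) :
    0 < s * (x - y) ^ 3 * (1 - x ^ 2) * (1 - y ^ 2) *
      ((2 * x * y + 3) * (x - y) ^ 2 + 5 * (1 - x * y) ^ 2) := by
  have hx2 : 0 < 1 - x ^ 2 := by nlinarith
  have hy2 : 0 < 1 - y ^ 2 := by nlinarith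
  have hxy : 0 < 2 * x * y + 3 := by nlinarith
  have hQ : 0 < (2 * x * y + 3) * (x - y) ^ 2 + 5 * (1 - x * y) ^ 2 := by
    have : 0 < (x - y) ^ 2 := by nlinarith
    positivity
  have : 0 < (x - y) ^ 3 := pow_pos (sub_pos.2 hyx) 3
  positivity

/-- The ε = 0 case of the boundary-condition analysis (3.10): the conditions
`P(x) = P(y) = 0`, `P'(x) = −2s(1−x²)`, `P'(y) = 2s(1−y²)` force `y = −x`
and `E = 0`. -/
theorem stmt_5 (s C D E x y : ℝ) (hs : 0 < s)
    (hy : -1 < y) (hyx : y < x) (hx : x < 1) (P : ℝ → ℝ)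
    (hP : P = fun t : ℝ =>
      -(D / 5) * t ^ 6 + (D - C / 3) * t ^ 4 + (2 * C - 3 * D) * t ^ 2
        + E * t + C - D)
    (hPx : P x = 0) (hPy : P y = 0)
    (hPx' : deriv P x = -2 * s * (1 - x ^ 2))
    (hPy' : deriv P y = 2 * s * (1 - y ^ 2)) :
    y = -x ∧ E = 0 := by
  change P = BoundaryPoly.P C D E at hP
  subst hP
  rw [(BoundaryPoly.hasDerivAt_P C D E x).deriv] at hPx'
  rw [(BoundaryPoly.hasDerivAt_P C D E y).deriv] at hPy'
  have hsum : x + y = 0 := (mul_eq_zero.mp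
    (BoundaryPoly.boundary_conditions_eliminant hPx hPy hPx' hPy')).resolve_right
    (eliminant_cofactor_pos hs hy hyx hx).ne'
  obtain rfl : y = -x := by linarith
  refine ⟨rfl, ?_⟩
  have hE : 2 * E * x = 0 := by
    rw [← BoundaryPoly.P_sub_P_neg, hPx, hPy, sub_zero]
  have hx0 : x ≠ 0 := by linarith
  simpa [hx0] using hE
end

section
/- There do not exist real numbers C, D, E and real numbers x, y with 0 < x < y such that the function z : (0,∞) → ℝ defined by z(h) = −4 + D·h⁴ + C·h² + E/h satisfies z(x) = 0, z'(x) = 2, z(y) = 0 and z'(y) = −2. -/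
/-!
Multiplying by `h`, the profile becomes `h z(h) + 4h = D h⁵ + C h³ + E`, and the boundary
conditions turn into four equations that are linear in `(C, D, E)`: the values `4x, 4y` and
the slopes `2x + 4, 4 - 2y` of this quintic at `x` and `y`. Eliminating `C, D, E` leaves
`(y - x)² G(x, y) = 0` (`G = eliminant`), and every term of `G` is positive when `0 < x < y`.
-/

namespace BiHermitianProfile

noncomputable def profile (C D E h : ℝ) : ℝ := -4 + D * h ^ 4 + C * h ^ 2 + E / h

variable {C D E x : ℝ}

theorem hasDerivAt_profile (hx : x ≠ 0) :
    HasDerivAt (profile C D E) (4 * D * x ^ 3 + 2 * C * x - E / x ^ 2) x := by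
  have hD : HasDerivAt (fun h : ℝ => D * h ^ 4) (D * (4 * x ^ 3)) x := by
    simpa using (hasDerivAt_pow 4 x).const_mul D
  have hC : HasDerivAt (fun h : ℝ => C * h ^ 2) (C * (2 * x)) x := by
    simpa using (hasDerivAt_pow 2 x).const_mul C
  have hE : HasDerivAt (fun h : ℝ => E / h) (E * -(x ^ 2)⁻¹) x := by
    simpa only [div_eq_mul_inv] using (hasDerivAt_inv hx).const_mul E
  exact (((hD.const_add (-4)).add hC).add hE).congr_deriv (by ring)

theorem quintic_eq_of_profile_eq_zero (hx : x ≠ 0) (h : profile C D E x = 0) :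
    D * x ^ 5 + C * x ^ 3 + E = 4 * x := by
  unfold profile at h
  field_simp at h
  linear_combination h

theorem quintic_slope_eq (hx : x ≠ 0) (h : profile C D E x = 0) {v : ℝ}
    (hv : deriv (profile C D E) x = v) :
    5 * D * x ^ 4 + 3 * C * x ^ 2 = v * x + 4 := by
  rw [(hasDerivAt_profile hx).deriv] at hv
  have hval := quintic_eq_of_profile_eq_zero hx h
  field_simp at hv
  refine mul_left_cancel₀ hx ?_
  linear_combination hv + hval

def eliminant (x y : ℝ) : ℝ :=
  4 * (y - x) * (x ^ 3 + 4 * x ^ 2 * y + 4 * x * y ^ 2 + y ^ 3) +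
    x * y * (2 * x ^ 3 + 3 * x ^ 2 * y + 3 * x * y ^ 2 + 2 * y ^ 3)

theorem sq_sub_mul_eliminant_eq_zero {y : ℝ}
    (hvalx : D * x ^ 5 + C * x ^ 3 + E = 4 * x)
    (hslopex : 5 * D * x ^ 4 + 3 * C * x ^ 2 = 2 * x + 4)
    (hvaly : D * y ^ 5 + C * y ^ 3 + E = 4 * y)
    (hslopey : 5 * D * y ^ 4 + 3 * C * y ^ 2 = -2 * y + 4) :
    (y - x) ^ 2 * eliminant x y = 0 := by
  unfold eliminant
  -- `E` cancels in `hvaly - hvalx`; the slope multipliers then make `C` and `D` cancel too.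
  linear_combination (1 / 2 : ℝ) * (15 * x ^ 2 * y ^ 2 * (x + y) * (hvaly - hvalx)
    - (y - x) * x ^ 2 * (2 * x ^ 3 + 4 * x ^ 2 * y + 6 * x * y ^ 2 + 3 * y ^ 3) * hslopey
    - (y - x) * y ^ 2 * (3 * x ^ 3 + 6 * x ^ 2 * y + 4 * x * y ^ 2 + 2 * y ^ 3) * hslopex)

theorem eliminant_pos {y : ℝ} (hx : 0 < x) (hxy : x < y) : 0 < eliminant x y := by
  have hy : 0 < y := hx.trans hxy
  have hyx : 0 < y - x := sub_pos.2 hxy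
  unfold eliminant
  positivity

end BiHermitianProfile

open BiHermitianProfile in
/-- Computational core of Theorem 3, genus g > 1: no profile function
`z(h) = −4 + Dh⁴ + Ch² + E/h` can satisfy the boundary conditions
`z(x) = 0, z'(x) = 2, z(y) = 0, z'(y) = −2` with `0 < x < y`. -/
theorem stmt_6 :
    ¬ ∃ (C D E x y : ℝ), 0 < x ∧ x < y ∧
      (-4 + D * x ^ 4 + C * x ^ 2 + E / x = 0) ∧
      deriv (fun h : ℝ => -4 + D * h ^ 4 + C * h ^ 2 + E / h) x = 2 ∧
      (-4 + D * y ^ 4 + C * y ^ 2 + E / y = 0) ∧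
      deriv (fun h : ℝ => -4 + D * h ^ 4 + C * h ^ 2 + E / h) y = -2 := by
  rintro ⟨C, D, E, x, y, hx, hxy, hzx, hdx, hzy, hdy⟩
  have hy : 0 < y := hx.trans hxy
  have key := sq_sub_mul_eliminant_eq_zero
    (quintic_eq_of_profile_eq_zero hx.ne' hzx) (quintic_slope_eq hx.ne' hzx hdx)
    (quintic_eq_of_profile_eq_zero hy.ne' hzy) (quintic_slope_eq hy.ne' hzy hdy)
  exact (mul_pos (pow_pos (sub_pos.2 hxy) 2) (eliminant_pos hx hxy)).ne' key
end

section
/- There do not exist real numbers C, D, E and real numbers x, y with 0 < x < y such that the function z : (0,∞) → ℝ defined by z(h) = D·h⁴ + C·h² + E/h satisfies z(x) = 0, z'(x) = 2, z(y) = 0 and z'(y) = −2. -/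
/-!
Clearing the denominator, `h z(h) = D h⁵ + C h³ + E`, so at a zero `t` of `z` we get
`E = -(D t⁵ + C t³)` and `z'(t) = 5 D t³ + 3 C t`. The four boundary conditions then give the
homogeneous linear system `D (x⁵ - y⁵) + C (x³ - y³) = 0`, `5 D (x³ + y³) + 3 C (x + y) = 0`
in `(D, C)`, whose determinant `(y + x) (y - x)³ (2y² + xy + 2x²)` vanishes only if `y = ±x`.
Hence `D = C = 0`, contradicting `z'(x) = 2`.
-/

theorem hasDerivAt_quartic_add_quadratic_add_div {C D E t : ℝ} (ht : t ≠ 0) :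
    HasDerivAt (fun h : ℝ => D * h ^ 4 + C * h ^ 2 + E / h)
      (4 * D * t ^ 3 + 2 * C * t - E / t ^ 2) t := by
  have h := (((hasDerivAt_pow 4 t).const_mul D).add ((hasDerivAt_pow 2 t).const_mul C)).add
    ((hasDerivAt_inv ht).const_mul E)
  refine (h.congr_deriv ?_).congr_of_eventuallyEq (.of_forall fun h => ?_)
  · norm_num
    ring
  · simp [div_eq_mul_inv]

theorem quartic_add_quadratic_add_div_eq_zero_iff {C D E t : ℝ} (ht : t ≠ 0) :
    D * t ^ 4 + C * t ^ 2 + E / t = 0 ↔ E = -(D * t ^ 5 + C * t ^ 3) := by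
  constructor <;> intro h
  · field_simp at h
    linear_combination h
  · subst h
    field_simp
    ring

theorem deriv_quartic_add_quadratic_add_div_of_eq_zero {C D E t : ℝ} (ht : t ≠ 0)
    (hz : D * t ^ 4 + C * t ^ 2 + E / t = 0) :
    deriv (fun h : ℝ => D * h ^ 4 + C * h ^ 2 + E / h) t = 5 * D * t ^ 3 + 3 * C * t := by
  rw [hasDerivAt_quartic_add_quadratic_add_div ht |>.deriv,
    (quartic_add_quadratic_add_div_eq_zero_iff ht).mp hz]
  field_simp
  ring

theorem eq_zero_of_fifth_third_system {x y C D : ℝ} (hxy : x ≠ y) (hxy' : x + y ≠ 0)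
    (h₁ : D * (x ^ 5 - y ^ 5) + C * (x ^ 3 - y ^ 3) = 0)
    (h₂ : 5 * D * (x ^ 3 + y ^ 3) + 3 * C * (x + y) = 0) :
    D = 0 ∧ C = 0 := by
  set Δ := 3 * (x + y) * (x ^ 5 - y ^ 5) - 5 * (x ^ 3 - y ^ 3) * (x ^ 3 + y ^ 3)
  have hΔ : Δ = (y + x) * (y - x) ^ 3 * (2 * y ^ 2 + x * y + 2 * x ^ 2) := by ring
  have hquad : 0 < 2 * y ^ 2 + x * y + 2 * x ^ 2 := by
    nlinarith [sq_pos_of_ne_zero (sub_ne_zero.mpr hxy), sq_nonneg (x + y)]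
  have hΔ0 : Δ ≠ 0 := by
    rw [hΔ]
    exact mul_ne_zero (mul_ne_zero (by rwa [add_comm])
      (pow_ne_zero 3 (sub_ne_zero.mpr hxy.symm))) hquad.ne'
  have hD : Δ * D = 0 := by linear_combination 3 * (x + y) * h₁ - (x ^ 3 - y ^ 3) * h₂
  have hC : Δ * C = 0 := by linear_combination (x ^ 5 - y ^ 5) * h₂ - 5 * (x ^ 3 + y ^ 3) * h₁
  exact ⟨(mul_eq_zero.mp hD).resolve_left hΔ0, (mul_eq_zero.mp hC).resolve_left hΔ0⟩

/-- Computational core of Theorem 3, torus case: no profile function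
`z(h) = Dh⁴ + Ch² + E/h` can satisfy the boundary conditions
`z(x) = 0, z'(x) = 2, z(y) = 0, z'(y) = −2` with `0 < x < y`. -/
theorem stmt_7 :
    ¬ ∃ (C D E x y : ℝ), 0 < x ∧ x < y ∧
      (D * x ^ 4 + C * x ^ 2 + E / x = 0) ∧
      deriv (fun h : ℝ => D * h ^ 4 + C * h ^ 2 + E / h) x = 2 ∧
      (D * y ^ 4 + C * y ^ 2 + E / y = 0) ∧
      deriv (fun h : ℝ => D * h ^ 4 + C * h ^ 2 + E / h) y = -2 := by
  rintro ⟨C, D, E, x, y, hx, hxy, hzx, hdx, hzy, hdy⟩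
  have hy : 0 < y := hx.trans hxy
  rw [deriv_quartic_add_quadratic_add_div_of_eq_zero hx.ne' hzx] at hdx
  rw [deriv_quartic_add_quadratic_add_div_of_eq_zero hy.ne' hzy] at hdy
  have hEx := (quartic_add_quadratic_add_div_eq_zero_iff hx.ne').mp hzx
  have hEy := (quartic_add_quadratic_add_div_eq_zero_iff hy.ne').mp hzy
  have h₁ : D * (x ^ 5 - y ^ 5) + C * (x ^ 3 - y ^ 3) = 0 := by linear_combination hEx - hEy
  have h₂ : 5 * D * (x ^ 3 + y ^ 3) + 3 * C * (x + y) = 0 := by linear_combination hdx + hdy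
  obtain ⟨rfl, rfl⟩ := eq_zero_of_fifth_third_system hxy.ne (by positivity) h₁ h₂
  norm_num at hdx
end

section
/- Let η be the unique real root of the cubic ξ³ + 5ξ² + 75ξ + 59. For every x ∈ (−1, 1), the polynomial Q_x(t) = t³ + (2 + x)t² + (5 + 6x)t + 8 + 13x + 4x² satisfies Q_x(t) > 0 for all t ∈ (x, 1) if and only if η < x < 1. -/
/-!
With `u = 3t + 2 + x`, `27 Q_x(t)` becomes the depressed cubic `u³ - 3Du + 2E`, where
`D = x² - 14x - 11` and `E = x³ + 33x² + 111x + 71`, and `E² - D³ = 108 (x + 1)² S(x)`.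
The interval `t ∈ (x, 1)` becomes `u ∈ (4x + 2, x + 5)`, and at its left end
`Q_x(x) = 2 (x + 1)² (x + 4) > 0`.

If `S(x) ≤ 0` then `D > 0`, the local minimum `u = √D` of the depressed cubic lies in the
interval, and its value `2 (E - √D³)` is `≤ 0` because `E² ≤ D³`.
If `S(x) > 0` then the depressed cubic is increasing to the left of `-2√D` and, by
`u³ - 3Du + 2E = (u - √D)² (u + 2√D) + 2 (E - √D³)`, positive to the right of it, since
`E > √D³` (or `D ≤ 0`, in which case it is increasing everywhere).
-/

def depressedCubic (p q u : ℝ) : ℝ := u ^ 3 - 3 * p * u + 2 * q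

section DepressedCubic

variable {p q u v d : ℝ}

lemma depressedCubic_sub_depressedCubic (p q u v : ℝ) :
    depressedCubic p q u - depressedCubic p q v = (u - v) * (u ^ 2 + u * v + v ^ 2 - 3 * p) := by
  unfold depressedCubic; ring

lemma depressedCubic_eq_of_sq_eq (hd : d ^ 2 = p) (q u : ℝ) :
    depressedCubic p q u = (u - d) ^ 2 * (u + 2 * d) + 2 * (q - d ^ 3) := by
  unfold depressedCubic; subst hd; ring

lemma depressedCubic_monotone_of_nonpos (hp : p ≤ 0) (q : ℝ) : Monotone (depressedCubic p q) := by
  intro v u hvu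
  have hsum : 0 ≤ u ^ 2 + u * v + v ^ 2 - 3 * p := by nlinarith [sq_nonneg (u + v)]
  nlinarith [depressedCubic_sub_depressedCubic p q u v, mul_nonneg (sub_nonneg.2 hvu) hsum]

lemma depressedCubic_pos_of_le (hd : 0 ≤ d) (hdp : d ^ 2 = p) (hq : d ^ 3 < q)
    (hv : 0 < depressedCubic p q v) (hvu : v ≤ u) : 0 < depressedCubic p q u := by
  rcases le_or_gt (-2 * d) u with hu | hu
  · rw [depressedCubic_eq_of_sq_eq hdp]
    have : 0 ≤ (u - d) ^ 2 * (u + 2 * d) := mul_nonneg (sq_nonneg _) (by linarith)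
    linarith
  · -- both `u` and `v` are `< -2d ≤ 0`, so `u² + uv + v² ≥ 12 d² ≥ 3p`
    have hsum : 0 ≤ u ^ 2 + u * v + v ^ 2 - 3 * p := by
      subst hdp; nlinarith [mul_nonneg (sub_nonneg.2 hvu) (by linarith : (0 : ℝ) ≤ -2 * d - u)]
    nlinarith [depressedCubic_sub_depressedCubic p q u v, mul_nonneg (sub_nonneg.2 hvu) hsum]

lemma depressedCubic_nonpos_of_sq_le (hd : 0 ≤ d) (hdp : d ^ 2 = p) (hq : q ^ 2 ≤ p ^ 3) :
    depressedCubic p q d ≤ 0 := by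
  have : q ≤ d ^ 3 := le_of_sq_le_sq (by rw [← hdp] at hq; linarith [hq]) (pow_nonneg hd 3)
  rw [depressedCubic_eq_of_sq_eq hdp]
  nlinarith

end DepressedCubic

namespace BoundaryCubic

def Q (x t : ℝ) : ℝ := t ^ 3 + (2 + x) * t ^ 2 + (5 + 6 * x) * t + 8 + 13 * x + 4 * x ^ 2

def S (ξ : ℝ) : ℝ := ξ ^ 3 + 5 * ξ ^ 2 + 75 * ξ + 59

def D (x : ℝ) : ℝ := x ^ 2 - 14 * x - 11

def E (x : ℝ) : ℝ := x ^ 3 + 33 * x ^ 2 + 111 * x + 71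

variable {x t : ℝ}

lemma S_strictMono : StrictMono S := by
  intro a b hab
  have h : 0 < a ^ 2 + a * b + b ^ 2 + 5 * a + 5 * b + 75 := by
    nlinarith [sq_nonneg (a - b), sq_nonneg (a + b + 10 / 3)]
  have : S b - S a = (b - a) * (a ^ 2 + a * b + b ^ 2 + 5 * a + 5 * b + 75) := by
    unfold S; ring
  nlinarith [mul_pos (sub_pos.2 hab) h]

lemma twentySeven_mul_Q (x t : ℝ) : 27 * Q x t = depressedCubic (D x) (E x) (3 * t + 2 + x) := by
  unfold Q D E depressedCubic; ring

lemma E_sq_sub_D_cube (x : ℝ) : E x ^ 2 - D x ^ 3 = 108 * (x + 1) ^ 2 * S x := by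
  unfold E D S; ring

lemma Q_self (x : ℝ) : Q x x = 2 * (x + 1) ^ 2 * (x + 4) := by
  unfold Q; ring

lemma Q_self_pos (hx : -1 < x) : 0 < Q x x := by
  rw [Q_self]
  have : 0 < x + 4 := by linarith
  have : 0 < x + 1 := by linarith
  positivity

lemma E_pos (hS : 0 < S x) : 0 < E x := by
  have : E x = S x + 28 * (x + 9 / 14) ^ 2 + 3 / 7 := by unfold E S; ring
  nlinarith [sq_nonneg (x + 9 / 14)]

lemma sqrt_D_cube_lt_E (hx : -1 < x) (hS : 0 < S x) (hD : 0 < D x) :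
    Real.sqrt (D x) ^ 3 < E x := by
  have hlt : (Real.sqrt (D x) ^ 3) ^ 2 < E x ^ 2 := by
    rw [← pow_mul, mul_comm, pow_mul, Real.sq_sqrt hD.le]
    have : 0 < x + 1 := by linarith
    have : 0 < 108 * (x + 1) ^ 2 * S x := by positivity
    nlinarith [E_sq_sub_D_cube x]
  exact (le_abs_self _).trans_lt (abs_lt_of_sq_lt_sq hlt (E_pos hS).le)

lemma Q_pos_of_lt (hx : -1 < x) (hS : 0 < S x) (hxt : x < t) : 0 < Q x t := by
  have hv : 0 < depressedCubic (D x) (E x) (3 * x + 2 + x) := by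
    rw [← twentySeven_mul_Q]; linarith [Q_self_pos hx]
  have hvu : 3 * x + 2 + x ≤ 3 * t + 2 + x := by linarith
  suffices 0 < depressedCubic (D x) (E x) (3 * t + 2 + x) by
    rw [← twentySeven_mul_Q] at this; linarith
  rcases le_or_gt (D x) 0 with hD | hD
  · exact hv.trans_le (depressedCubic_monotone_of_nonpos hD _ hvu)
  · exact depressedCubic_pos_of_le (Real.sqrt_nonneg _) (Real.sq_sqrt hD.le)
      (sqrt_D_cube_lt_E hx hS hD) hv hvu

lemma exists_Q_nonpos (hx : -1 < x) (hS : S x ≤ 0) : ∃ t, x < t ∧ t < 1 ∧ Q x t ≤ 0 := by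
  have hx34 : x < -3 / 4 := by
    by_contra! h
    have : 0 ≤ x ^ 2 * (x + 5) := mul_nonneg (sq_nonneg x) (by linarith)
    unfold S at hS; nlinarith
  have hD : 0 < D x := by unfold D; nlinarith
  set d := Real.sqrt (D x)
  have hd : d ^ 2 = D x := Real.sq_sqrt hD.le
  have hd0 : 0 < d := Real.sqrt_pos.2 hD
  -- `t = (d - 2 - x) / 3` corresponds to the critical point `u = d`
  refine ⟨(d - 2 - x) / 3, by linarith, ?_, ?_⟩
  · have : d < x + 5 := by
      apply lt_of_pow_lt_pow_left₀ 2 (by linarith)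
      rw [hd]; unfold D; nlinarith
    linarith
  · have hE : E x ^ 2 ≤ D x ^ 3 := by
      nlinarith [E_sq_sub_D_cube x, mul_nonneg (sq_nonneg (x + 1)) (neg_nonneg.2 hS)]
    have := twentySeven_mul_Q x ((d - 2 - x) / 3)
    rw [show 3 * ((d - 2 - x) / 3) + 2 + x = d by ring] at this
    linarith [depressedCubic_nonpos_of_sq_le hd0.le hd hE]

lemma Q_pos_on_Ioo_iff (hx : -1 < x) : (∀ t, x < t → t < 1 → 0 < Q x t) ↔ 0 < S x := by
  refine ⟨fun h => ?_, fun hS t hxt _ => Q_pos_of_lt hx hS hxt⟩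
  by_contra! hS
  obtain ⟨t, hxt, ht1, hQ⟩ := exists_Q_nonpos hx hS
  exact (h t hxt ht1).not_ge hQ

end BoundaryCubic

open BoundaryCubic in
theorem stmt_9_general (η : ℝ)
    (hη : η ^ 3 + 5 * η ^ 2 + 75 * η + 59 = 0)
    (x : ℝ) (hx1 : -1 < x) (hx2 : x < 1) :
    (∀ t : ℝ, x < t → t < 1 →
        0 < t ^ 3 + (2 + x) * t ^ 2 + (5 + 6 * x) * t + 8 + 13 * x + 4 * x ^ 2)
      ↔ (η < x ∧ x < 1) := by
  have hSη : S η = 0 := hη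
  rw [and_iff_left hx2, ← S_strictMono.lt_iff_lt, hSη]
  exact Q_pos_on_Ioo_iff hx1

/-- Positivity of the cubic factor `Q_x(t)` on `(x, 1)` holds exactly for
`x ∈ (η, 1)`, where `η` is the unique real root of `ξ³ + 5ξ² + 75ξ + 59`. -/
theorem stmt_9 (η : ℝ)
    (hη : η ^ 3 + 5 * η ^ 2 + 75 * η + 59 = 0)
    (hηuniq : ∀ ξ : ℝ, ξ ^ 3 + 5 * ξ ^ 2 + 75 * ξ + 59 = 0 → ξ = η)
    (x : ℝ) (hx1 : -1 < x) (hx2 : x < 1) :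
    (∀ t : ℝ, x < t → t < 1 →
        0 < t ^ 3 + (2 + x) * t ^ 2 + (5 + 6 * x) * t + 8 + 13 * x + 4 * x ^ 2)
      ↔ (η < x ∧ x < 1) :=
  stmt_9_general η hη x hx1 hx2
end

section
/- Let y < x be real numbers and let z : ℝ → ℝ be twice continuously differentiable with z(y) = 0, z(x) = 0, z(t) > 0 for all t ∈ (y, x), z'(y) = 2 and z'(x) = −2. Then there exist a > 0 and a strictly increasing, continuously differentiable function h : [−a, a] → ℝ such that h(−a) = y, h(a) = x, and h'(t) = √(z(h(t))) for all t ∈ [−a, a]; moreover h' is differentiable on [−a, a] (one-sidedly at the endpoints) with h''(−a) = 1 and h''(a) = −1. -/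
/-!
The equation `h' = √(z ∘ h)` is solved by inverting the primitive `G s = ∫ u in y..s, (√(z u))⁻¹`,
shifted so that its range is `[-a, a]`. `G` is finite because `z` vanishes only to first order at
the ends: near `y`, `z u ≈ c (u - y)` with `c = z' y`, so by L'Hôpital `G s ≈ 2 √((s - y) / c)`.
Inverting, `h (-a + τ) - y ≈ c τ² / 4`, whence `h' (-a) = 0` and `(√(z ∘ h))' (-a) = c / 2`.
The right end is the left end of the reflected profile `u ↦ z (-u)`.
-/

open Set Filter Topology MeasureTheory intervalIntegral

theorem exists_continuous_invOn_of_strictMonoOn {α β : Type*} [ConditionallyCompleteLinearOrder α]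
    [TopologicalSpace α] [OrderTopology α] [DenselyOrdered α] [LinearOrder β] [TopologicalSpace β]
    [OrderTopology β] {F : α → β} {a b : α} (hab : a ≤ b)
    (hF : ContinuousOn F (Icc a b)) (hmono : StrictMonoOn F (Icc a b)) :
    ∃ g : β → α, Continuous g ∧ StrictMonoOn g (Icc (F a) (F b)) ∧
      InvOn g F (Icc a b) (Icc (F a) (F b)) := by
  have hFab : F a ≤ F b := hmono.monotoneOn (left_mem_Icc.2 hab) (right_mem_Icc.2 hab) hab
  let F' : Icc a b → Icc (F a) (F b) := fun s =>
    ⟨F s, hmono.monotoneOn (left_mem_Icc.2 hab) s.2 s.2.1,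
      hmono.monotoneOn s.2 (right_mem_Icc.2 hab) s.2.2⟩
  have hsurj : Function.Surjective F' := fun t => by
    obtain ⟨s, hs, hst⟩ := intermediate_value_Icc hab hF t.2
    exact ⟨⟨s, hs⟩, Subtype.ext hst⟩
  let e := StrictMono.orderIsoOfSurjective F' (fun s t hst => hmono s.2 t.2 hst) hsurj
  refine ⟨fun t => e.symm (projIcc (F a) (F b) hFab t), ?_, ?_, ?_, ?_⟩
  · exact continuous_subtype_val.comp (e.symm.continuous.comp continuous_projIcc)
  · intro s hs t ht hst
    simp only [projIcc_of_mem hFab hs, projIcc_of_mem hFab ht]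
    exact e.symm.strictMono hst
  · intro s hs
    have : projIcc (F a) (F b) hFab (F s) = e ⟨s, hs⟩ := projIcc_of_mem hFab _
    simp only [this, OrderIso.symm_apply_apply]
  · intro t ht
    simp only [projIcc_of_mem hFab ht]
    exact congrArg Subtype.val (e.apply_symm_apply ⟨t, ht⟩)

theorem strictMonoOn_primitive_of_pos {p : ℝ → ℝ} {y x : ℝ}
    (hint : IntervalIntegrable p volume y x) (hp : ∀ u ∈ Ioo y x, 0 < p u) :
    StrictMonoOn (fun s => ∫ u in y..s, p u) (Icc y x) := by
  intro s hs t ht hst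
  have hint' : ∀ r ∈ Icc y x, IntervalIntegrable p volume y r := fun r hr =>
    hint.mono_set (uIcc_subset_uIcc_left (Icc_subset_uIcc hr))
  have hpos : 0 < ∫ u in s..t, p u := intervalIntegral_pos_of_pos_on
    (hint.mono_set (uIcc_subset_uIcc (Icc_subset_uIcc hs) (Icc_subset_uIcc ht)))
    (fun u hu => hp u ⟨hs.1.trans_lt hu.1, hu.2.trans_le ht.2⟩) hst
  have := integral_interval_sub_left (hint' t ht) (hint' s hs)
  dsimp only
  linarith

theorem exists_strictMonoOn_inverse_primitive {p : ℝ → ℝ} {y x : ℝ} (hyx : y < x)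
    (hint : IntervalIntegrable p volume y x) (hp : ∀ u ∈ Ioo y x, 0 < p u) :
    ∃ a, 0 < a ∧ ∃ h : ℝ → ℝ, Continuous h ∧ StrictMonoOn h (Icc (-a) a) ∧
      h (-a) = y ∧ h a = x ∧ ∀ t ∈ Ioo (-a) a,
        h t ∈ Ioo y x ∧ ∫ u in y..h t, p u = t + a ∧ ∫ u in h t..x, p u = a - t := by
  obtain ⟨a, ha_def⟩ : ∃ a, ∫ u in y..x, p u = 2 * a := ⟨(∫ u in y..x, p u) / 2, by ring⟩
  have ha : 0 < a := by linarith [intervalIntegral_pos_of_pos_on hint hp hyx]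
  let F := fun s => (∫ u in y..s, p u) - a
  have hmono : StrictMonoOn F (Icc y x) := fun s hs t ht hst =>
    sub_lt_sub_right (strictMonoOn_primitive_of_pos hint hp hs ht hst) a
  have hcont : ContinuousOn F (Icc y x) := by
    rw [← uIcc_of_le hyx.le]
    exact (continuousOn_primitive_interval' hint left_mem_uIcc).sub continuousOn_const
  have hFy : F y = -a := by simp [F]
  have hFx : F x = a := by simp only [F, ha_def]; ring
  obtain ⟨h, hh, hhmono, hleft, hright⟩ :=
    exists_continuous_invOn_of_strictMonoOn hyx.le hcont hmono
  rw [hFy, hFx] at hhmono hright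
  have hya : h (-a) = y := hFy ▸ hleft (left_mem_Icc.2 hyx.le)
  have hxa : h a = x := hFx ▸ hleft (right_mem_Icc.2 hyx.le)
  refine ⟨a, ha, h, hh, hhmono, hya, hxa, fun t ht => ?_⟩
  have hht : h t ∈ Ioo y x :=
    ⟨hya ▸ hhmono (left_mem_Icc.2 (by linarith)) (Ioo_subset_Icc_self ht) ht.1,
      hxa ▸ hhmono (Ioo_subset_Icc_self ht) (right_mem_Icc.2 (by linarith)) ht.2⟩
  have hFt : (∫ u in y..h t, p u) - a = t := hright (Ioo_subset_Icc_self ht)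
  have := integral_interval_sub_left hint (hint.mono_set (uIcc_subset_uIcc_left
    (Icc_subset_uIcc (Ioo_subset_Icc_self hht))))
  exact ⟨hht, by linarith, by linarith⟩

theorem HasDerivAt.comp_neg {f : ℝ → ℝ} {f' x : ℝ} (h : HasDerivAt f f' x) :
    HasDerivAt (fun u => f (-u)) (-f') (-x) := by
  simpa [Function.comp_def] using
    (show HasDerivAt f f' (-(-x)) by rwa [neg_neg]).scomp (-x) (hasDerivAt_neg (-x))

theorem hasDerivWithinAt_Icc_of_forall_Ioo {f f' : ℝ → ℝ} {a b : ℝ}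
    (ha : HasDerivWithinAt f (f' a) (Ici a) a) (hb : HasDerivWithinAt f (f' b) (Iic b) b)
    (hi : ∀ t ∈ Ioo a b, HasDerivAt f (f' t) t) :
    ∀ t ∈ Icc a b, HasDerivWithinAt f (f' t) (Icc a b) t := by
  intro t ht
  rcases eq_endpoints_or_mem_Ioo_of_mem_Icc ht with rfl | rfl | ht'
  · exact ha.mono Icc_subset_Ici_self
  · exact hb.mono Icc_subset_Iic_self
  · exact (hi t ht').hasDerivWithinAt

section SimpleZero

variable {z : ℝ → ℝ} {y x c d : ℝ}

theorem tendsto_div_sub_nhdsGT_of_hasDerivAt (hzy : z y = 0) (hc : HasDerivAt z c y) :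
    Tendsto (fun u => z u / (u - y)) (𝓝[>] y) (𝓝 c) := by
  refine ((hasDerivAt_iff_tendsto_slope.1 hc).mono_left (nhdsGT_le_nhdsNE y)).congr fun u => ?_
  rw [slope_def_field, hzy, sub_zero]

theorem eventually_mul_sub_lt_of_hasDerivAt (hzy : z y = 0) (hc : HasDerivAt z c y) {b : ℝ}
    (hb : b < c) :
    ∀ᶠ u in 𝓝[>] y, b * (u - y) < z u := by
  filter_upwards [(tendsto_div_sub_nhdsGT_of_hasDerivAt hzy hc).eventually (lt_mem_nhds hb),
    self_mem_nhdsWithin] with u hu hyu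
  rwa [lt_div_iff₀ (sub_pos.2 hyu)] at hu

theorem tendsto_sqrt_div_sqrt_sub_of_hasDerivAt (hzy : z y = 0) (hc : HasDerivAt z c y) :
    Tendsto (fun u => √(z u) / √(u - y)) (𝓝[>] y) (𝓝 √c) := by
  refine ((Real.continuous_sqrt.tendsto c).comp
    (tendsto_div_sub_nhdsGT_of_hasDerivAt hzy hc)).congr' ?_
  filter_upwards [self_mem_nhdsWithin] with u hyu
  exact Real.sqrt_div' _ (sub_nonneg.2 (le_of_lt hyu))

theorem eventually_intervalIntegrable_inv_sqrt (hz : Continuous z) (hzy : z y = 0)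
    (hc : HasDerivAt z c y) (hc0 : 0 < c) :
    ∀ᶠ s in 𝓝[>] y, IntervalIntegrable (fun u => (√(z u))⁻¹) volume y s := by
  obtain ⟨b, hyb, hb⟩ := (nhdsGT_basis y).eventually_iff.1
    (eventually_mul_sub_lt_of_hasDerivAt hzy hc (half_lt_self hc0))
  filter_upwards [Ioo_mem_nhdsGT hyb] with s hs
  have hbound :
      IntervalIntegrable (fun u => (√(c / 2))⁻¹ * (u - y) ^ (-(1 / 2) : ℝ)) volume y s := by
    have := (intervalIntegrable_rpow' (a := 0) (b := s - y) (r := -(1 / 2))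
      (by norm_num)).comp_sub_right y
    simpa using this.const_mul (√(c / 2))⁻¹
  refine hbound.mono_fun' (hz.sqrt.measurable.inv.aestronglyMeasurable) ?_
  rw [uIoc_of_le hs.1.le, EventuallyLE, ae_restrict_iff' measurableSet_Ioc]
  refine ae_of_all _ fun u hu => ?_
  have hyu : 0 < u - y := sub_pos.2 hu.1
  have hzu := hb ⟨hu.1, hu.2.trans_lt hs.2⟩
  rw [Real.norm_of_nonneg (inv_nonneg.2 (Real.sqrt_nonneg _)), Real.rpow_neg hyu.le,
    ← Real.sqrt_eq_rpow, ← mul_inv, ← Real.sqrt_mul (by positivity)]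
  exact inv_anti₀ (by positivity) (Real.sqrt_le_sqrt hzu.le)

theorem tendsto_integral_inv_sqrt_div_sqrt_sub (hz : Continuous z) (hzy : z y = 0)
    (hc : HasDerivAt z c y) (hc0 : 0 < c) :
    Tendsto (fun s => (∫ u in y..s, (√(z u))⁻¹) / √(s - y)) (𝓝[>] y) (𝓝 (2 / √c)) := by
  have hint := eventually_intervalIntegrable_inv_sqrt hz hzy hc hc0
  have hzpos : ∀ᶠ u in 𝓝[>] y, 0 < z u := by
    filter_upwards [eventually_mul_sub_lt_of_hasDerivAt hzy hc hc0] with u hu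
    simpa using hu
  refine HasDerivAt.lhopital_zero_nhdsGT (f' := fun s => (√(z s))⁻¹)
    (g' := fun s => 1 / (2 * √(s - y))) ?_ ?_ ?_ ?_ ?_ ?_
  · filter_upwards [hint, hzpos] with s hs hzs
    exact integral_hasDerivAt_right hs
      hz.sqrt.measurable.inv.stronglyMeasurable.stronglyMeasurableAtFilter
      (hz.sqrt.continuousAt.inv₀ (Real.sqrt_pos.2 hzs).ne')
  · filter_upwards [self_mem_nhdsWithin] with s hys
    simpa using ((hasDerivAt_id s).sub_const y).sqrt (sub_pos.2 hys).ne'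
  · filter_upwards [self_mem_nhdsWithin] with s hys
    have : 0 < √(s - y) := Real.sqrt_pos.2 (sub_pos.2 hys)
    positivity
  · obtain ⟨s, hs, hys⟩ := (hint.and self_mem_nhdsWithin).exists
    have := (continuousOn_primitive_interval' hs left_mem_uIcc).continuousWithinAt left_mem_uIcc
    rw [uIcc_of_le hys.le] at this
    simpa using (this.mono_of_mem_nhdsWithin (Icc_mem_nhdsGT hys)).tendsto
  · exact ((continuous_sub_right y).sqrt.tendsto' y 0 (by simp)).mono_left nhdsWithin_le_nhds
  · refine (tendsto_const_nhds.div (tendsto_sqrt_div_sqrt_sub_of_hasDerivAt hzy hc)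
      (Real.sqrt_pos.2 hc0).ne').congr' ?_
    filter_upwards [self_mem_nhdsWithin, hzpos] with s hys hzs
    have : 0 < √(s - y) := Real.sqrt_pos.2 (sub_pos.2 hys)
    have : 0 < √(z s) := Real.sqrt_pos.2 hzs
    simp only [Pi.div_apply]
    field_simp

theorem tendsto_sub_div_integral_inv_sqrt (hz : Continuous z) (hzy : z y = 0)
    (hc : HasDerivAt z c y) (hc0 : 0 < c) :
    Tendsto (fun s => (s - y) / ∫ u in y..s, (√(z u))⁻¹) (𝓝[>] y) (𝓝 0) := by
  have hsqrt : Tendsto (fun s => √(s - y)) (𝓝[>] y) (𝓝 0) :=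
    ((continuous_sub_right y).sqrt.tendsto' y 0 (by simp)).mono_left nhdsWithin_le_nhds
  have := hsqrt.div (tendsto_integral_inv_sqrt_div_sqrt_sub hz hzy hc hc0)
    (div_pos two_pos (Real.sqrt_pos.2 hc0)).ne'
  rw [zero_div] at this
  refine this.congr' ?_
  filter_upwards [self_mem_nhdsWithin] with s hys
  simp only [Pi.div_apply]
  rw [div_div_eq_mul_div, ← pow_two, Real.sq_sqrt (sub_pos.2 hys).le]

theorem tendsto_sqrt_div_integral_inv_sqrt (hz : Continuous z) (hzy : z y = 0)
    (hc : HasDerivAt z c y) (hc0 : 0 < c) :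
    Tendsto (fun s => √(z s) / ∫ u in y..s, (√(z u))⁻¹) (𝓝[>] y) (𝓝 (c / 2)) := by
  have := (tendsto_sqrt_div_sqrt_sub_of_hasDerivAt hzy hc).div
    (tendsto_integral_inv_sqrt_div_sqrt_sub hz hzy hc hc0)
    (div_pos two_pos (Real.sqrt_pos.2 hc0)).ne'
  rw [div_div_eq_mul_div, Real.mul_self_sqrt hc0.le] at this
  refine this.congr' ?_
  filter_upwards [self_mem_nhdsWithin] with s hys
  simp only [Pi.div_apply]
  exact div_div_div_cancel_right₀ (Real.sqrt_pos.2 (sub_pos.2 hys)).ne' _ _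

theorem hasDerivWithinAt_Ici_of_integral_inv_sqrt_eq (hz : Continuous z) (hzy : z y = 0)
    (hc : HasDerivAt z c y) (hc0 : 0 < c) {φ : ℝ → ℝ} {t₀ : ℝ} (hφ₀ : φ t₀ = y)
    (hφ : ContinuousWithinAt φ (Ioi t₀) t₀)
    (heq : ∀ᶠ t in 𝓝[>] t₀, y < φ t ∧ ∫ u in y..φ t, (√(z u))⁻¹ = t - t₀) :
    HasDerivWithinAt φ 0 (Ici t₀) t₀ ∧
      HasDerivWithinAt (fun t => √(z (φ t))) (c / 2) (Ici t₀) t₀ := by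
  have hφy : Tendsto φ (𝓝[>] t₀) (𝓝[>] y) :=
    tendsto_nhdsWithin_iff.2 ⟨hφ₀ ▸ hφ.tendsto, heq.mono fun t ht => ht.1⟩
  simp only [← hasDerivWithinAt_Ioi_iff_Ici]
  rw [hasDerivWithinAt_iff_tendsto_slope' self_notMem_Ioi,
    hasDerivWithinAt_iff_tendsto_slope' self_notMem_Ioi]
  constructor
  · refine ((tendsto_sub_div_integral_inv_sqrt hz hzy hc hc0).comp hφy).congr' ?_
    filter_upwards [heq] with t ht
    simp [slope_def_field, hφ₀, ht.2]
  · refine ((tendsto_sqrt_div_integral_inv_sqrt hz hzy hc hc0).comp hφy).congr' ?_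
    filter_upwards [heq] with t ht
    simp [slope_def_field, hφ₀, hzy, ht.2]

theorem eventually_intervalIntegrable_inv_sqrt_nhdsLT (hz : Continuous z) (hzx : z x = 0)
    (hc : HasDerivAt z (-c) x) (hc0 : 0 < c) :
    ∀ᶠ s in 𝓝[<] x, IntervalIntegrable (fun u => (√(z u))⁻¹) volume s x := by
  have := tendsto_neg_nhdsLT.eventually (eventually_intervalIntegrable_inv_sqrt
    (hz.comp continuous_neg) (by simpa using hzx) (by simpa [Function.comp_def] using hc.comp_neg)
    hc0)
  filter_upwards [this] with s hs
  rw [IntervalIntegrable.iff_comp_neg]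
  exact hs.symm

theorem tendsto_sub_div_integral_inv_sqrt_nhdsLT (hz : Continuous z) (hzx : z x = 0)
    (hc : HasDerivAt z (-c) x) (hc0 : 0 < c) :
    Tendsto (fun s => (x - s) / ∫ u in s..x, (√(z u))⁻¹) (𝓝[<] x) (𝓝 0) := by
  have := (tendsto_sub_div_integral_inv_sqrt (hz.comp continuous_neg) (by simpa using hzx)
    (by simpa [Function.comp_def] using hc.comp_neg) hc0).comp tendsto_neg_nhdsLT
  refine this.congr fun s => ?_
  simp [integral_comp_neg (fun u => (√(z u))⁻¹), neg_add_eq_sub]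

theorem tendsto_sqrt_div_integral_inv_sqrt_nhdsLT (hz : Continuous z) (hzx : z x = 0)
    (hc : HasDerivAt z (-c) x) (hc0 : 0 < c) :
    Tendsto (fun s => √(z s) / ∫ u in s..x, (√(z u))⁻¹) (𝓝[<] x) (𝓝 (c / 2)) := by
  have := (tendsto_sqrt_div_integral_inv_sqrt (hz.comp continuous_neg) (by simpa using hzx)
    (by simpa [Function.comp_def] using hc.comp_neg) hc0).comp tendsto_neg_nhdsLT
  refine this.congr fun s => ?_
  simp [integral_comp_neg (fun u => (√(z u))⁻¹)]

theorem hasDerivWithinAt_Iic_of_integral_inv_sqrt_eq (hz : Continuous z) (hzx : z x = 0)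
    (hc : HasDerivAt z (-c) x) (hc0 : 0 < c) {φ : ℝ → ℝ} {t₁ : ℝ} (hφ₁ : φ t₁ = x)
    (hφ : ContinuousWithinAt φ (Iio t₁) t₁)
    (heq : ∀ᶠ t in 𝓝[<] t₁, φ t < x ∧ ∫ u in φ t..x, (√(z u))⁻¹ = t₁ - t) :
    HasDerivWithinAt φ 0 (Iic t₁) t₁ ∧
      HasDerivWithinAt (fun t => √(z (φ t))) (-(c / 2)) (Iic t₁) t₁ := by
  have hφx : Tendsto φ (𝓝[<] t₁) (𝓝[<] x) :=
    tendsto_nhdsWithin_iff.2 ⟨hφ₁ ▸ hφ.tendsto, heq.mono fun t ht => ht.1⟩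
  simp only [← hasDerivWithinAt_Iio_iff_Iic]
  rw [hasDerivWithinAt_iff_tendsto_slope' self_notMem_Iio,
    hasDerivWithinAt_iff_tendsto_slope' self_notMem_Iio]
  constructor
  · refine ((tendsto_sub_div_integral_inv_sqrt_nhdsLT hz hzx hc hc0).comp hφx).congr' ?_
    filter_upwards [heq] with t ht
    rw [Function.comp_apply, ht.2, slope_def_field, hφ₁, ← neg_sub t₁ t, div_neg, ← neg_div,
      neg_sub]
  · refine ((tendsto_sqrt_div_integral_inv_sqrt_nhdsLT hz hzx hc hc0).comp hφx).neg.congr' ?_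
    filter_upwards [heq] with t ht
    rw [Function.comp_apply, ht.2, slope_def_field, hφ₁, hzx, Real.sqrt_zero, sub_zero,
      ← neg_sub t₁ t, div_neg]

theorem intervalIntegrable_inv_sqrt_of_simple_zeros (hz : Continuous z) (hyx : y < x)
    (hpos : ∀ u ∈ Ioo y x, 0 < z u) (hzy : z y = 0) (hzx : z x = 0)
    (hcy : HasDerivAt z c y) (hdx : HasDerivAt z (-d) x) (hc : 0 < c) (hd : 0 < d) :
    IntervalIntegrable (fun u => (√(z u))⁻¹) volume y x := by
  obtain ⟨s, hys, hsm⟩ := ((eventually_intervalIntegrable_inv_sqrt hz hzy hcy hc).and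
    (Ioo_mem_nhdsGT (show y < (y + x) / 2 by linarith))).exists
  obtain ⟨r, hrx, hmr⟩ := ((eventually_intervalIntegrable_inv_sqrt_nhdsLT hz hzx hdx hd).and
    (Ioo_mem_nhdsLT (show (y + x) / 2 < x by linarith))).exists
  have hsr : s ≤ r := by linarith [hsm.2, hmr.1]
  have hmid : IntervalIntegrable (fun u => (√(z u))⁻¹) volume s r := by
    refine ContinuousOn.intervalIntegrable fun u hu => ?_
    rw [uIcc_of_le hsr] at hu
    exact (hz.sqrt.continuousAt.inv₀ (Real.sqrt_pos.2
      (hpos u ⟨hsm.1.trans_le hu.1, hu.2.trans_lt hmr.2⟩)).ne').continuousWithinAt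
  exact (hys.trans hmid).trans hrx

theorem hasDerivAt_of_integral_inv_sqrt_eq {h : ℝ → ℝ} {t b : ℝ} (hz : Continuous z)
    (hzt : 0 < z (h t)) (hint : IntervalIntegrable (fun u => (√(z u))⁻¹) volume y (h t))
    (hh : ContinuousAt h t) (heq : ∀ᶠ s in 𝓝 t, ∫ u in y..h s, (√(z u))⁻¹ = s + b) :
    HasDerivAt h (√(z (h t))) t := by
  have hG : HasDerivAt (fun s => (∫ u in y..s, (√(z u))⁻¹) - b) (√(z (h t)))⁻¹ (h t) :=
    (integral_hasDerivAt_right hint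
      hz.sqrt.measurable.inv.stronglyMeasurable.stronglyMeasurableAtFilter
      (hz.sqrt.continuousAt.inv₀ (Real.sqrt_pos.2 hzt).ne')).sub_const b
  simpa using hG.of_local_left_inverse hh (inv_ne_zero (Real.sqrt_pos.2 hzt).ne')
    (heq.mono fun s hs => by rw [hs, add_sub_cancel_right])

theorem exists_solution_deriv_eq_sqrt (hz : Continuous z) (hyx : y < x)
    (hpos : ∀ u ∈ Ioo y x, 0 < z u) (hzy : z y = 0) (hzx : z x = 0)
    (hcy : HasDerivAt z c y) (hdx : HasDerivAt z (-d) x) (hc : 0 < c) (hd : 0 < d) :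
    ∃ a, 0 < a ∧ ∃ h : ℝ → ℝ, Continuous h ∧ StrictMonoOn h (Icc (-a) a) ∧
      h (-a) = y ∧ h a = x ∧ MapsTo h (Ioo (-a) a) (Ioo y x) ∧
      (∀ t ∈ Icc (-a) a, HasDerivWithinAt h (√(z (h t))) (Icc (-a) a) t) ∧
      HasDerivWithinAt (fun t => √(z (h t))) (c / 2) (Ici (-a)) (-a) ∧
      HasDerivWithinAt (fun t => √(z (h t))) (-(d / 2)) (Iic a) a := by
  have hint := intervalIntegrable_inv_sqrt_of_simple_zeros hz hyx hpos hzy hzx hcy hdx hc hd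
  obtain ⟨a, ha, h, hcont, hmono, hya, hxa, hprim⟩ := exists_strictMonoOn_inverse_primitive
    hyx hint fun u hu => inv_pos.2 (Real.sqrt_pos.2 (hpos u hu))
  obtain ⟨hl, hl'⟩ := hasDerivWithinAt_Ici_of_integral_inv_sqrt_eq hz hzy hcy hc hya
    hcont.continuousWithinAt (by
      filter_upwards [Ioo_mem_nhdsGT (neg_lt_self ha)] with t ht
      rw [sub_neg_eq_add]
      exact ⟨(hprim t ht).1.1, (hprim t ht).2.1⟩)
  obtain ⟨hr, hr'⟩ := hasDerivWithinAt_Iic_of_integral_inv_sqrt_eq hz hzx hdx hd hxa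
    hcont.continuousWithinAt (by
      filter_upwards [Ioo_mem_nhdsLT (neg_lt_self ha)] with t ht
      exact ⟨(hprim t ht).1.2, (hprim t ht).2.2⟩)
  have hi : ∀ t ∈ Ioo (-a) a, HasDerivAt h (√(z (h t))) t := fun t ht =>
    hasDerivAt_of_integral_inv_sqrt_eq hz (hpos _ (hprim t ht).1)
      (hint.mono_set (uIcc_subset_uIcc_left
        (Icc_subset_uIcc (Ioo_subset_Icc_self (hprim t ht).1))))
      hcont.continuousAt (by
        filter_upwards [Ioo_mem_nhds ht.1 ht.2] with s hs using (hprim s hs).2.1)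
  refine ⟨a, ha, h, hcont, hmono, hya, hxa, fun t ht => (hprim t ht).1,
    hasDerivWithinAt_Icc_of_forall_Ioo (f' := fun t => √(z (h t)))
      (by simpa [hya, hzy] using hl) (by simpa [hxa, hzx] using hr) hi, hl', hr'⟩

end SimpleZero

/-- ODE boundary-value lemma of Theorems 2 and 4: if `z` is C², positive
between two simple zeros `y < x` with `z'(y) = 2` and `z'(x) = −2`, then
`h' = √(z ∘ h)` has a strictly increasing C¹ solution `h : [−a, a] → ℝ`
joining `y` to `x`, with `h''(−a) = 1` and `h''(a) = −1` (one-sided). -/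
theorem stmt_10 (x y : ℝ) (hyx : y < x) (z : ℝ → ℝ)
    (hz : ContDiff ℝ 2 z)
    (hzy : z y = 0) (hzx : z x = 0)
    (hpos : ∀ t ∈ Set.Ioo y x, 0 < z t)
    (hzy' : deriv z y = 2) (hzx' : deriv z x = -2) :
    ∃ a : ℝ, 0 < a ∧ ∃ h : ℝ → ℝ,
      StrictMonoOn h (Set.Icc (-a) a) ∧
      h (-a) = y ∧ h a = x ∧
      (∀ t ∈ Set.Icc (-a) a,
        HasDerivWithinAt h (Real.sqrt (z (h t))) (Set.Icc (-a) a) t) ∧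
      ContinuousOn (fun t => derivWithin h (Set.Icc (-a) a) t) (Set.Icc (-a) a) ∧
      (∀ t ∈ Set.Icc (-a) a,
        DifferentiableWithinAt ℝ
          (fun u => derivWithin h (Set.Icc (-a) a) u) (Set.Icc (-a) a) t) ∧
      derivWithin (fun u => derivWithin h (Set.Icc (-a) a) u)
          (Set.Icc (-a) a) (-a) = 1 ∧
      derivWithin (fun u => derivWithin h (Set.Icc (-a) a) u)
          (Set.Icc (-a) a) a = -1 := by
  have hzd : Differentiable ℝ z := hz.differentiable two_ne_zero
  obtain ⟨a, ha, h, hcont, hmono, hya, hxa, hmaps, hderiv, hl, hr⟩ :=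
    exists_solution_deriv_eq_sqrt hz.continuous hyx hpos hzy hzx (hzy' ▸ (hzd y).hasDerivAt)
      (hzx' ▸ (hzd x).hasDerivAt) two_pos two_pos
  have hS : UniqueDiffOn ℝ (Icc (-a) a) := uniqueDiffOn_Icc (neg_lt_self ha)
  have hSl : -a ∈ Icc (-a) a := left_mem_Icc.2 (neg_le_self ha.le)
  have hSr : a ∈ Icc (-a) a := right_mem_Icc.2 (neg_le_self ha.le)
  have heqOn : EqOn (derivWithin h (Icc (-a) a)) (fun t => √(z (h t))) (Icc (-a) a) :=
    fun t ht => (hderiv t ht).derivWithin (hS t ht)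
  refine ⟨a, ha, h, hmono, hya, hxa, hderiv,
    (hz.continuous.comp hcont).sqrt.continuousOn.congr heqOn, fun t ht => ?_, ?_, ?_⟩
  · refine DifferentiableWithinAt.congr ?_ heqOn (heqOn ht)
    rcases eq_endpoints_or_mem_Ioo_of_mem_Icc ht with rfl | rfl | ht'
    · exact (hl.mono Icc_subset_Ici_self).differentiableWithinAt
    · exact (hr.mono Icc_subset_Iic_self).differentiableWithinAt
    · exact ((hzd _).comp_differentiableWithinAt t (hderiv t ht).differentiableWithinAt).sqrt
        (hpos _ (hmaps ht')).ne'
  · rw [derivWithin_congr heqOn (heqOn hSl)]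
    norm_num [(hl.mono Icc_subset_Ici_self).derivWithin (hS _ hSl)]
  · rw [derivWithin_congr heqOn (heqOn hSr)]
    norm_num [(hr.mono Icc_subset_Iic_self).derivWithin (hS _ hSr)]
end

section
/- Let s > 0, let ε ∈ {0, 1}, and let x ∈ (0, 1). Define P : ℝ → ℝ by P(t) = (1/(x(15 − 5x² − 11x⁴ + x⁶))) · (t² − x²) · ( s·(−15 + 10x² − 3x⁴ + t²(10 + 12x² − 6x⁴) + t⁴(−3 − 6x² + x⁴)) + 4εx·(x²(−5 + x²) − t⁴(3 + x²) + t²(5 + 2x² + x⁴)) ). Then P(t) > 0 for all t ∈ (−x, x). -/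
/-!
In the variables `u = t²` and `v = x²`, with `0 ≤ u < v < 1`, every factor of `P` has a fixed
sign: the prefactor is `1 / (x (1 - v) (15 + 10v - v²)) > 0`, the factor `u - v` is negative,
and both coefficients of the last factor, the one of `s` and the one of `4εx`, are negative.
The latter two facts come from rewriting each coefficient as minus a sum of products of the
positive quantities `1 - v`, `v - u`, `1 - u` and quadratics in `v` that are positive on `[0, 1]`.
-/

/- The coefficients of `s` and of `4εx` in the last factor of `P`, written in `u = t²`, `v = x²`. -/
def sCoeff (u v : ℝ) : ℝ :=
  -15 + 10 * v - 3 * v ^ 2 + u * (10 + 12 * v - 6 * v ^ 2) + u ^ 2 * (-3 - 6 * v + v ^ 2)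

def epsCoeff (u v : ℝ) : ℝ :=
  v * (-5 + v) - u ^ 2 * (3 + v) + u * (5 + 2 * v + v ^ 2)

section

variable {u v : ℝ}

lemma cubic_pos_of_lt_one (hv0 : 0 ≤ v) (hv1 : v < 1) :
    0 < 15 - 5 * v - 11 * v ^ 2 + v ^ 3 := by
  have hfactor : 15 - 5 * v - 11 * v ^ 2 + v ^ 3 = (1 - v) * (15 + 10 * v - v ^ 2) := by ring
  rw [hfactor]
  exact mul_pos (by linarith) (by nlinarith)

lemma sCoeff_eq (u v : ℝ) :
    sCoeff u v = -((1 - v) ^ 2 * (15 + 10 * v - v ^ 2)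
      + (v - u) * (2 * (1 - v) * (5 + 8 * v - v ^ 2) + (v - u) * (3 + 6 * v - v ^ 2))) := by
  unfold sCoeff
  ring

lemma sCoeff_neg (hu : 0 ≤ u) (huv : u < v) (hv : v < 1) : sCoeff u v < 0 := by
  have h1v : 0 < 1 - v := by linarith
  have hvu : 0 < v - u := by linarith
  have hq1 : 0 < 15 + 10 * v - v ^ 2 := by nlinarith
  have hq2 : 0 < 5 + 8 * v - v ^ 2 := by nlinarith
  have hq3 : 0 < 3 + 6 * v - v ^ 2 := by nlinarith
  rw [sCoeff_eq, neg_lt_zero]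
  exact add_pos (mul_pos (pow_pos h1v 2) hq1)
    (mul_pos hvu (add_pos (mul_pos (mul_pos two_pos h1v) hq2) (mul_pos hvu hq3)))

lemma epsCoeff_eq (u v : ℝ) :
    epsCoeff u v = -((v - u) * (4 * (1 - u) + (1 - v) * (1 + u))) := by
  unfold epsCoeff
  ring

lemma epsCoeff_neg (hu : 0 ≤ u) (huv : u < v) (hv : v < 1) : epsCoeff u v < 0 := by
  rw [epsCoeff_eq, neg_lt_zero]
  exact mul_pos (by linarith) (add_pos (by linarith) (mul_pos (by linarith) (by linarith)))

end

/-- Positivity of the factorized polynomial (3.14) on `(−x, x)` for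
`x ∈ (0, 1)`, `s > 0` and `ε ∈ {0, 1}`. -/
theorem stmt_11 (s e x : ℝ) (hs : 0 < s) (he : e = 0 ∨ e = 1)
    (hx1 : 0 < x) (hx2 : x < 1) (P : ℝ → ℝ)
    (hP : P = fun t : ℝ =>
      (1 / (x * (15 - 5 * x ^ 2 - 11 * x ^ 4 + x ^ 6))) *
        ((t ^ 2 - x ^ 2) *
          (s * (-15 + 10 * x ^ 2 - 3 * x ^ 4
              + t ^ 2 * (10 + 12 * x ^ 2 - 6 * x ^ 4)
              + t ^ 4 * (-3 - 6 * x ^ 2 + x ^ 4))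
            + 4 * e * x * (x ^ 2 * (-5 + x ^ 2) - t ^ 4 * (3 + x ^ 2)
              + t ^ 2 * (5 + 2 * x ^ 2 + x ^ 4))))) :
    ∀ t ∈ Set.Ioo (-x) x, 0 < P t := by
  rintro t ⟨hxt, htx⟩
  have hu : 0 ≤ t ^ 2 := sq_nonneg t
  have huv : t ^ 2 < x ^ 2 := sq_lt_sq' hxt htx
  have hv : x ^ 2 < 1 := pow_lt_one₀ hx1.le hx2 two_ne_zero
  have he0 : 0 ≤ e := by rcases he with rfl | rfl <;> norm_num
  have hPt : P t = 1 / (x * (15 - 5 * x ^ 2 - 11 * (x ^ 2) ^ 2 + (x ^ 2) ^ 3)) *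
      ((t ^ 2 - x ^ 2) * (s * sCoeff (t ^ 2) (x ^ 2) + 4 * e * x * epsCoeff (t ^ 2) (x ^ 2))) := by
    subst hP
    unfold sCoeff epsCoeff
    ring
  have hlast : s * sCoeff (t ^ 2) (x ^ 2) + 4 * e * x * epsCoeff (t ^ 2) (x ^ 2) < 0 :=
    add_neg_of_neg_of_nonpos (mul_neg_of_pos_of_neg hs (sCoeff_neg hu huv hv))
      (mul_nonpos_of_nonneg_of_nonpos (by positivity) (epsCoeff_neg hu huv hv).le)
  rw [hPt]
  exact mul_pos (one_div_pos.2 (mul_pos hx1 (cubic_pos_of_lt_one (hu.trans_lt huv).le hv)))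
    (mul_pos_of_neg_of_neg (sub_neg.2 huv) hlast)
end

section
/- Let s, ε, E ∈ ℝ and let x ∈ ℝ satisfy x ≠ 0, x² ≠ 1 and 15 + 10x² − x⁴ ≠ 0. Then there exists a unique pair (D, C) ∈ ℝ × ℝ such that −4εx² − (D/5)x⁶ + (D − C/3)x⁴ + (2C − 3D)x² − 4ε + C − D + Ex = 0 and −8εx − (6D/5)x⁵ + 4(D − C/3)x³ + 2(2C − 3D)x + E = −2s(1 − x²). -/
/-!
Moving the terms without `D` or `C` to the right-hand side turns the two conditions into a
2 × 2 linear system in `(D, C)`, whose determinant factors as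
`(2/15) x (1 - x²)² (15 + 10x² - x⁴)`; it is nonzero under the hypotheses, so Cramer's rule
gives the unique solution.
-/

theorem existsUnique_linear_system_of_det_ne_zero {K : Type*} [Field K] {a₁ b₁ a₂ b₂ : K}
    (hdet : a₁ * b₂ - a₂ * b₁ ≠ 0) (c₁ c₂ : K) :
    ∃! p : K × K, a₁ * p.1 + b₁ * p.2 = c₁ ∧ a₂ * p.1 + b₂ * p.2 = c₂ := by
  refine ⟨((c₁ * b₂ - c₂ * b₁) / (a₁ * b₂ - a₂ * b₁), (a₁ * c₂ - a₂ * c₁) / (a₁ * b₂ - a₂ * b₁)),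
    ⟨?_, ?_⟩, ?_⟩
  · rw [mul_div_assoc', mul_div_assoc', ← add_div, div_eq_iff hdet]
    ring
  · rw [mul_div_assoc', mul_div_assoc', ← add_div, div_eq_iff hdet]
    ring
  · rintro ⟨u, v⟩ ⟨h₁, h₂⟩
    simp only [Prod.mk.injEq]
    constructor
    · rw [eq_div_iff hdet]
      linear_combination b₂ * h₁ - b₁ * h₂
    · rw [eq_div_iff hdet]
      linear_combination a₁ * h₂ - a₂ * h₁

/-- Unique solvability of the linear system (3.11a)–(3.11b) in `(D, C)`. -/
theorem stmt_12 (s e E x : ℝ) (hx0 : x ≠ 0) (hx1 : x ^ 2 ≠ 1)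
    (hx2 : 15 + 10 * x ^ 2 - x ^ 4 ≠ 0) :
    ∃! DC : ℝ × ℝ,
      (-4 * e * x ^ 2 - (DC.1 / 5) * x ^ 6 + (DC.1 - DC.2 / 3) * x ^ 4
          + (2 * DC.2 - 3 * DC.1) * x ^ 2 - 4 * e + DC.2 - DC.1 + E * x = 0) ∧
      (-8 * e * x - (6 * DC.1 / 5) * x ^ 5 + 4 * (DC.1 - DC.2 / 3) * x ^ 3
          + 2 * (2 * DC.2 - 3 * DC.1) * x + E = -2 * s * (1 - x ^ 2)) := by
  have hdet : (-x ^ 6 / 5 + x ^ 4 - 3 * x ^ 2 - 1) * (-4 * x ^ 3 / 3 + 4 * x)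
      - (-6 * x ^ 5 / 5 + 4 * x ^ 3 - 6 * x) * (-x ^ 4 / 3 + 2 * x ^ 2 + 1) ≠ 0 := by
    have hx1' : 1 - x ^ 2 ≠ 0 := sub_ne_zero.mpr (Ne.symm hx1)
    have hfactor : (-x ^ 6 / 5 + x ^ 4 - 3 * x ^ 2 - 1) * (-4 * x ^ 3 / 3 + 4 * x)
      - (-6 * x ^ 5 / 5 + 4 * x ^ 3 - 6 * x) * (-x ^ 4 / 3 + 2 * x ^ 2 + 1)
        = 2 / 15 * x * (1 - x ^ 2) ^ 2 * (15 + 10 * x ^ 2 - x ^ 4) := by ring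
    rw [hfactor]
    exact mul_ne_zero (mul_ne_zero (mul_ne_zero (by norm_num) hx0) (pow_ne_zero 2 hx1')) hx2
  refine (existsUnique_congr fun DC => ?_).mp
    (existsUnique_linear_system_of_det_ne_zero hdet (4 * e * x ^ 2 + 4 * e - E * x)
      (-2 * s * (1 - x ^ 2) + 8 * e * x - E))
  constructor <;> rintro ⟨h₁, h₂⟩
  · exact ⟨by linear_combination h₁, by linear_combination h₂⟩
  · exact ⟨by linear_combination h₁, by linear_combination h₂⟩
end

section
/- Let η be the unique real root of the cubic ξ³ + 5ξ² + 75ξ + 59, let ε ∈ {−1, 1}, and let x ∈ ℝ be such that either ε = 1 and η < x < 1, or ε = −1 and x > 1. Define, for t ≠ −1, z_x(t) = ε(t − 1)(t − x)(t³ + (2 + x)t² + (5 + 6x)t + 8 + 13x + 4x²) / ((1 + t)(x − 1)(1 + x)(4 + x)). Then z_x(x) = 0, z_x(1) = 0, z_x'(x) = 2ε, z_x'(1) = −2ε, and z_x(t) > 0 for all t strictly between x and 1. -/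
/-!
The derivative claims hold because `z_x = (t - x) h(t) = (t - 1) k(t)` with `h`, `k` smooth
near the zeros, so `z_x'(x) = h(x)` and `z_x'(1) = k(1)`; these evaluate to `±2ε` since the cubic
factor `C_x` takes the values `2 (x+1)² (x+4)` and `4 (x+1) (x+4)` at `t = x` and `t = 1`.
Positivity between `x` and `1` is a sign count once `C_x > 0` there. For `x > 1` this is clear
(all coefficients are positive). For `η < x < 1` it suffices to rule out a nonpositive interior
local minimum of `C_x` on `[x, 1]`: the resultant of `C_x` and `∂ₜ C_x` is `8 (x+1)² S(x)`,
which is positive because `S` is strictly increasing and vanishes at `η`.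
-/

namespace Profile

open Set

/-- The cubic `S(ξ)` whose real root is `η`. -/
def S (ξ : ℝ) : ℝ := ξ ^ 3 + 5 * ξ ^ 2 + 75 * ξ + 59

/-- The cubic factor `C_x(t)` of the profile function `z_x`. -/
def cubic (x t : ℝ) : ℝ := t ^ 3 + (2 + x) * t ^ 2 + (5 + 6 * x) * t + 8 + 13 * x + 4 * x ^ 2

/-- The profile function `z_x`, with `e` standing for `ε`. -/
noncomputable def z (e x t : ℝ) : ℝ :=
  e * (t - 1) * (t - x) * cubic x t / ((1 + t) * (x - 1) * (1 + x) * (4 + x))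

theorem S_strictMono : StrictMono S := by
  intro a b hab
  have hq : 0 < (a + b + 5) ^ 2 + a ^ 2 + b ^ 2 + 125 := by positivity
  have : S b - S a = (b - a) * ((a + b + 5) ^ 2 + a ^ 2 + b ^ 2 + 125) / 2 := by unfold S; ring
  nlinarith [mul_pos (sub_pos.2 hab) hq]

theorem neg_one_lt_of_S_eq_zero {η : ℝ} (hη : S η = 0) : -1 < η :=
  S_strictMono.lt_iff_lt.1 (by rw [hη]; norm_num [S])

theorem cubic_self (x : ℝ) : cubic x x = 2 * (x + 1) ^ 2 * (x + 4) := by unfold cubic; ring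

theorem cubic_one (x : ℝ) : cubic x 1 = 4 * (x + 1) * (x + 4) := by unfold cubic; ring

theorem hasDerivAt_cubic (x t : ℝ) :
    HasDerivAt (cubic x) (3 * t ^ 2 + 2 * (2 + x) * t + (5 + 6 * x)) t := by
  have h : HasDerivAt (cubic x)
      (3 * t ^ 2 + (2 + x) * (2 * t ^ 1) + (5 + 6 * x) * 1 + 0 + 0 + 0) t := by
    unfold cubic
    apply_rules [HasDerivAt.add, HasDerivAt.const_mul, hasDerivAt_pow, hasDerivAt_id',
      hasDerivAt_const]
  convert h using 1; ring

theorem cubic_pos_of_nonneg {x t : ℝ} (hx : 0 ≤ x) (ht : 0 ≤ t) : 0 < cubic x t := by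
  unfold cubic; positivity

/-- Bézout identity for the resultant `8 (x+1)² S(x)` of `C_x` and `∂ₜ C_x` in `t`. -/
theorem cofactor_mul_cubic (x t : ℝ) :
    ((3 * x ^ 2 - 42 * x - 33) * t + 2 * x ^ 3 + 21 * x ^ 2 + 72 * x + 49) * cubic x t
      = 8 * (x + 1) ^ 2 * S x
        + ((2 * x ^ 2 - 28 * x - 22) * t ^ 2 + (2 * x ^ 3 + 6 * x ^ 2 + 22 * x + 18) * t
            + (18 * x ^ 3 - 52 * x ^ 2 - 94 * x - 32)) / 2
          * (3 * t ^ 2 + 2 * (2 + x) * t + (5 + 6 * x)) := by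
  unfold cubic S; ring

theorem cubic_pos_of_cofactor_nonpos {x t : ℝ} (hx : -1 < x) (hxt : x ≤ t) (ht : t ≤ 1)
    (hS : 0 < S x)
    (hcof : (3 * x ^ 2 - 42 * x - 33) * t + 2 * x ^ 3 + 21 * x ^ 2 + 72 * x + 49 ≤ 0) :
    0 < cubic x t := by
  unfold S at hS; unfold cubic
  have hx' : -83 / 100 < x := by nlinarith [sq_nonneg (x + 417 / 200), sq_nonneg x]
  have hmid : 0 ≤ (t - x) * (1 - t) := mul_nonneg (by linarith) (by linarith)
  nlinarith [sq_nonneg (t - x), sq_nonneg (x + 1), mul_pos hS (by linarith : (0 : ℝ) < 2 - t),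
    mul_nonneg hmid (by linarith : (0 : ℝ) ≤ x + 1)]

theorem cubic_pos_of_deriv_eq_zero {x t : ℝ} (hx : -1 < x) (hxt : x ≤ t) (ht : t ≤ 1)
    (hS : 0 < S x) (hcrit : 3 * t ^ 2 + 2 * (2 + x) * t + (5 + 6 * x) = 0) :
    0 < cubic x t := by
  by_cases hcof : (3 * x ^ 2 - 42 * x - 33) * t + 2 * x ^ 3 + 21 * x ^ 2 + 72 * x + 49 ≤ 0
  · exact cubic_pos_of_cofactor_nonpos hx hxt ht hS hcof
  · have hres := cofactor_mul_cubic x t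
    rw [hcrit, mul_zero, add_zero] at hres
    have : 0 < x + 1 := by linarith
    have : 0 < 8 * (x + 1) ^ 2 * S x := by positivity
    exact pos_of_mul_pos_right (hres ▸ this) (not_le.1 hcof).le

theorem pos_on_Icc_of_pos_of_isLocalMin {f : ℝ → ℝ} {a b : ℝ} (hab : a ≤ b)
    (hf : ContinuousOn f (Icc a b)) (ha : 0 < f a) (hb : 0 < f b)
    (hmin : ∀ u ∈ Ioo a b, IsLocalMin f u → 0 < f u) :
    ∀ t ∈ Icc a b, 0 < f t := by
  obtain ⟨u, hu, hmin_u⟩ := isCompact_Icc.exists_isMinOn (nonempty_Icc.2 hab) hf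
  have hfu : 0 < f u := by
    rcases hu.1.eq_or_lt with rfl | hau
    · exact ha
    rcases hu.2.eq_or_lt with rfl | hub
    · exact hb
    exact hmin u ⟨hau, hub⟩ (hmin_u.isLocalMin (Icc_mem_nhds hau hub))
  exact fun t ht => hfu.trans_le (hmin_u ht)

theorem cubic_pos_of_mem_Icc {x t : ℝ} (hx : -1 < x) (hx1 : x < 1) (hS : 0 < S x)
    (ht : t ∈ Icc x 1) : 0 < cubic x t := by
  refine pos_on_Icc_of_pos_of_isLocalMin hx1.le (by unfold cubic; fun_prop) ?_ ?_ ?_ t ht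
  · rw [cubic_self]
    have : 0 < x + 1 := by linarith
    have : 0 < x + 4 := by linarith
    positivity
  · rw [cubic_one]; exact mul_pos (mul_pos four_pos (by linarith)) (by linarith)
  · intro u hu hmin
    exact cubic_pos_of_deriv_eq_zero hx hu.1.le hu.2.le hS
      (hmin.hasDerivAt_eq_zero (hasDerivAt_cubic x u))

theorem deriv_sub_mul {h : ℝ → ℝ} {a : ℝ} (hh : DifferentiableAt ℝ h a) :
    deriv (fun t => (t - a) * h t) a = h a := by
  have : HasDerivAt (fun t => (t - a) * h t) (1 * h a + (a - a) * deriv h a) a :=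
    ((hasDerivAt_id' a).sub_const a).mul hh.hasDerivAt
  rw [this.deriv]; ring

theorem z_self (e x : ℝ) : z e x x = 0 := by simp [z]

theorem z_one (e x : ℝ) : z e x 1 = 0 := by simp [z]

section Derivatives

variable {e x : ℝ}

theorem differentiableAt_z_factor (c : ℝ) {t : ℝ}
    (hden : (1 + t) * (x - 1) * (1 + x) * (4 + x) ≠ 0) :
    DifferentiableAt ℝ
      (fun s => e * (s - c) * cubic x s / ((1 + s) * (x - 1) * (1 + x) * (4 + x))) t := by
  unfold cubic; fun_prop (disch := exact hden)

theorem deriv_z_self (hx : -1 < x) (hx1 : x ≠ 1) : deriv (z e x) x = 2 * e := by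
  have : x - 1 ≠ 0 := sub_ne_zero.2 hx1
  have : 1 + x ≠ 0 := by linarith
  have : 4 + x ≠ 0 := by linarith
  have hden : (1 + x) * (x - 1) * (1 + x) * (4 + x) ≠ 0 := by positivity
  have hz : z e x = fun t => (t - x) *
      (e * (t - 1) * cubic x t / ((1 + t) * (x - 1) * (1 + x) * (4 + x))) := by
    ext t; unfold z; ring
  rw [hz, deriv_sub_mul (differentiableAt_z_factor 1 hden), cubic_self]
  field_simp
  ring

theorem deriv_z_one (hx : -1 < x) (hx1 : x ≠ 1) : deriv (z e x) 1 = -2 * e := by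
  have : x - 1 ≠ 0 := sub_ne_zero.2 hx1
  have : 1 + x ≠ 0 := by linarith
  have : 4 + x ≠ 0 := by linarith
  have hden : (1 + 1) * (x - 1) * (1 + x) * (4 + x) ≠ 0 := by positivity
  have hz : z e x = fun t => (t - 1) *
      (e * (t - x) * cubic x t / ((1 + t) * (x - 1) * (1 + x) * (4 + x))) := by
    ext t; unfold z; ring
  rw [hz, deriv_sub_mul (differentiableAt_z_factor x hden), cubic_one]
  field_simp
  ring

end Derivatives

theorem z_pos {e x t : ℝ} (hex : e * (x - 1) < 0) (hbetween : (t - 1) * (t - x) < 0)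
    (hx : -1 < x) (ht : -1 < t) (hC : 0 < cubic x t) : 0 < z e x t := by
  have hx1 : x - 1 ≠ 0 := by rintro h; simp [h] at hex
  have hz : z e x t = (e * (x - 1)) * ((t - 1) * (t - x)) * cubic x t
      / ((1 + t) * (x - 1) ^ 2 * (1 + x) * (4 + x)) := by
    unfold z; field_simp
  rw [hz]
  have : 0 < 1 + t := by linarith
  have : 0 < 1 + x := by linarith
  have : 0 < 4 + x := by linarith
  exact div_pos (mul_pos (mul_pos_of_neg_of_neg hex hbetween) hC) (by positivity)

end Profile

open Profile in
theorem stmt_13_general (η : ℝ)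
    (hη : η ^ 3 + 5 * η ^ 2 + 75 * η + 59 = 0)
    (e x : ℝ)
    (hcase : (e = 1 ∧ η < x ∧ x < 1) ∨ (e = -1 ∧ 1 < x))
    (zx : ℝ → ℝ)
    (hzx : zx = fun t : ℝ =>
      e * (t - 1) * (t - x) *
          (t ^ 3 + (2 + x) * t ^ 2 + (5 + 6 * x) * t + 8 + 13 * x + 4 * x ^ 2)
        / ((1 + t) * (x - 1) * (1 + x) * (4 + x))) :
    zx x = 0 ∧ zx 1 = 0 ∧ deriv zx x = 2 * e ∧ deriv zx 1 = -2 * e ∧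
    ∀ t ∈ Set.Ioo (min x 1) (max x 1), 0 < zx t := by
  have hη1 : -1 < η := neg_one_lt_of_S_eq_zero hη
  have hx : -1 < x ∧ x ≠ 1 := by
    rcases hcase with ⟨_, hηx, hx1⟩ | ⟨_, hx1⟩
    · exact ⟨hη1.trans hηx, hx1.ne⟩
    · exact ⟨by linarith, hx1.ne'⟩
  obtain rfl : zx = z e x := hzx
  refine ⟨z_self e x, z_one e x, deriv_z_self hx.1 hx.2, deriv_z_one hx.1 hx.2, ?_⟩
  rintro t ⟨hxt, htx⟩
  rcases hcase with ⟨rfl, hηx, hx1⟩ | ⟨rfl, hx1⟩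
  · rw [min_eq_left hx1.le] at hxt; rw [max_eq_right hx1.le] at htx
    have hS : 0 < S x := hη ▸ S_strictMono hηx
    exact z_pos (by linarith) (mul_neg_of_neg_of_pos (by linarith) (by linarith)) hx.1
      (by linarith) (cubic_pos_of_mem_Icc hx.1 hx1 hS ⟨hxt.le, htx.le⟩)
  · rw [min_eq_right hx1.le] at hxt; rw [max_eq_left hx1.le] at htx
    exact z_pos (by linarith) (mul_neg_of_pos_of_neg (by linarith) (by linarith)) hx.1
      (by linarith) (cubic_pos_of_nonneg (by linarith) (by linarith))

/-- Key computation of Theorem 4: for `x ∈ (η, 1)` with `ε = 1`, or `x > 1`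
with `ε = −1`, the profile function `z_x` vanishes at `x` and `1` with
derivatives `2ε` and `−2ε` there, and is positive strictly between `x`
and `1`. -/
theorem stmt_13 (η : ℝ)
    (hη : η ^ 3 + 5 * η ^ 2 + 75 * η + 59 = 0)
    (hηuniq : ∀ ξ : ℝ, ξ ^ 3 + 5 * ξ ^ 2 + 75 * ξ + 59 = 0 → ξ = η)
    (e x : ℝ)
    (hcase : (e = 1 ∧ η < x ∧ x < 1) ∨ (e = -1 ∧ 1 < x))
    (zx : ℝ → ℝ)
    (hzx : zx = fun t : ℝ =>
      e * (t - 1) * (t - x) *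
          (t ^ 3 + (2 + x) * t ^ 2 + (5 + 6 * x) * t + 8 + 13 * x + 4 * x ^ 2)
        / ((1 + t) * (x - 1) * (1 + x) * (4 + x))) :
    zx x = 0 ∧ zx 1 = 0 ∧ deriv zx x = 2 * e ∧ deriv zx 1 = -2 * e ∧
    ∀ t ∈ Set.Ioo (min x 1) (max x 1), 0 < zx t :=
  stmt_13_general η hη e x hcase zx hzx
end
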